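/- arXiv:1701.05094 — 6 statements merged into one kernel-verified Lean document; each statement's English description precedes it below -/
import Mathlib

section
/- If A and B are polyhedra in ℝⁿ, then A ∩ B is a polyhedron in ℝⁿ. -/
open Set

/-- A polytope in ℝⁿ: the convex hull of a finite set of points. -/
def IsPolytope {n : ℕ} (s : Set (Fin n → ℝ)) : Prop :=
  ∃ V : Finset (Fin n → ℝ), s = convexHull ℝ (V : Set (Fin n → ℝ))

/-- A polyhedron in ℝⁿ: a finite union of polytopes. -/
def IsPolyhedron {n : ℕ} (P : Set (Fin n → ℝ)) : Prop :=
  ∃ S : Set (Set (Fin n → ℝ)), S.Finite ∧ (∀ s ∈ S, IsPolytope s) ∧ P = ⋃₀ S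

/-- A simplex in ℝⁿ: the convex hull of a nonempty finite affinely independent set. -/
def IsSimplex {n : ℕ} (s : Set (Fin n → ℝ)) : Prop :=
  ∃ V : Finset (Fin n → ℝ), V.Nonempty ∧
    AffineIndependent ℝ (fun x : {x : Fin n → ℝ // x ∈ V} => x.val) ∧
    s = convexHull ℝ (V : Set (Fin n → ℝ))

/-- `IsFaceOf s t`: `t` is a simplex with vertex set `W` and `s` is the convex hull
of a nonempty subset of `W`. -/
def IsFaceOf {n : ℕ} (s t : Set (Fin n → ℝ)) : Prop :=
  ∃ W V : Finset (Fin n → ℝ), W.Nonempty ∧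
    AffineIndependent ℝ (fun x : {x : Fin n → ℝ // x ∈ W} => x.val) ∧
    t = convexHull ℝ (W : Set (Fin n → ℝ)) ∧
    V.Nonempty ∧ V ⊆ W ∧ s = convexHull ℝ (V : Set (Fin n → ℝ))

/-- A triangulation in ℝⁿ: a finite set of simplices closed under taking faces, such that
any two members intersect in a common face (or not at all). -/
structure IsTriangulation {n : ℕ} (K : Set (Set (Fin n → ℝ))) : Prop where
  finite : K.Finite
  simplex : ∀ s ∈ K, IsSimplex s
  face_mem : ∀ s ∈ K, ∀ t, IsFaceOf t s → t ∈ K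
  inter : ∀ s ∈ K, ∀ t ∈ K, s ∩ t = ∅ ∨ (IsFaceOf (s ∩ t) s ∧ IsFaceOf (s ∩ t) t)

/-- A set of simplices closed under taking faces. -/
def FaceClosed {n : ℕ} (D : Set (Set (Fin n → ℝ))) : Prop :=
  ∀ s ∈ D, ∀ t, IsFaceOf t s → t ∈ D

/-- A `K`-definable polyhedron: the union of a face-closed subset of `K`. -/
def SigmaDefinable {n : ℕ} (K : Set (Set (Fin n → ℝ))) (C : Set (Fin n → ℝ)) : Prop :=
  ∃ D ⊆ K, FaceClosed D ∧ C = ⋃₀ D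

/-- A `K`-definable open set: the complement in `|K| = ⋃₀ K` of a `K`-definable polyhedron. -/
def SigmaDefOpen {n : ℕ} (K : Set (Set (Fin n → ℝ))) (O : Set (Fin n → ℝ)) : Prop :=
  ∃ C, SigmaDefinable K C ∧ O = ⋃₀ K \ C

/-- The open star of a simplex `s` in a triangulation `K`. -/
def openStar {n : ℕ} (K : Set (Set (Fin n → ℝ))) (s : Set (Fin n → ℝ)) : Set (Fin n → ℝ) :=
  ⋃ t ∈ {t ∈ K | s ⊆ t}, intrinsicInterior ℝ t

/-- The interior of `S` in the subspace topology of `P`, viewed as a subset of ℝⁿ. -/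
def intSub {n : ℕ} (P S : Set (Fin n → ℝ)) : Set (Fin n → ℝ) :=
  Subtype.val '' interior (Subtype.val ⁻¹' S : Set P)

/-- An open subpolyhedron of a polyhedron `P`: a subset of `P` whose complement in `P`
is a polyhedron. -/
def IsOpenSubpoly {n : ℕ} (P O : Set (Fin n → ℝ)) : Prop :=
  O ⊆ P ∧ IsPolyhedron (P \ O)

/-- `s` is a simplex with exactly `k` (affinely independent) vertices. -/
def SimplexWithCard {n : ℕ} (s : Set (Fin n → ℝ)) (k : ℕ) : Prop :=
  ∃ V : Finset (Fin n → ℝ), V.Nonempty ∧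
    AffineIndependent ℝ (fun x : {x : Fin n → ℝ // x ∈ V} => x.val) ∧
    s = convexHull ℝ (V : Set (Fin n → ℝ)) ∧ V.card = k

/-- `P` contains a simplex with `d+1` affinely independent vertices, and no simplex with more;
i.e. the polyhedron `P` has dimension exactly `d`. -/
def PolyDimEq {n : ℕ} (P : Set (Fin n → ℝ)) (d : ℕ) : Prop :=
  (∃ V : Finset (Fin n → ℝ), V.Nonempty ∧
      AffineIndependent ℝ (fun x : {x : Fin n → ℝ // x ∈ V} => x.val) ∧
      convexHull ℝ (V : Set (Fin n → ℝ)) ⊆ P ∧ V.card = d + 1) ∧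
  (∀ V : Finset (Fin n → ℝ),
      AffineIndependent ℝ (fun x : {x : Fin n → ℝ // x ∈ V} => x.val) →
      convexHull ℝ (V : Set (Fin n → ℝ)) ⊆ P → V.card ≤ d + 1)

/-- The polyhedron `P` has dimension at most `d`. -/
def PolyDimLE {n : ℕ} (P : Set (Fin n → ℝ)) (d : ℕ) : Prop :=
  ∀ V : Finset (Fin n → ℝ),
    AffineIndependent ℝ (fun x : {x : Fin n → ℝ // x ∈ V} => x.val) →
    convexHull ℝ (V : Set (Fin n → ℝ)) ⊆ P → V.card ≤ d + 1

/-- The triangulation `K` has combinatorial dimension exactly `d`. -/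
def TriangDimEq {n : ℕ} (K : Set (Set (Fin n → ℝ))) (d : ℕ) : Prop :=
  (∃ s ∈ K, SimplexWithCard s (d + 1)) ∧
  (∀ s ∈ K, ∀ k, SimplexWithCard s k → k ≤ d + 1)

/-- The bounded-depth terms: `bdTerm P k V = V k ∪ (V k ⇨ bdTerm P (k-1) V)`,
where `U ⇨ W = int_P ((P \ U) ∪ W)` is the Heyting implication of open subsets of `P`. -/
def bdTerm {n : ℕ} (P : Set (Fin n → ℝ)) :
    (k : ℕ) → (Fin (k + 1) → Set (Fin n → ℝ)) → Set (Fin n → ℝ)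
  | 0, V => V 0 ∪ intSub P (P \ V 0)
  | k + 1, V => V (Fin.last (k + 1)) ∪
      intSub P ((P \ V (Fin.last (k + 1))) ∪ bdTerm P k (fun i => V i.castSucc))

/-- The finite poset `A` has depth exactly `d`: it has a chain of cardinality `d+1`
and no longer chain. -/
def depthEq (A : Type) [PartialOrder A] (d : ℕ) : Prop :=
  (∃ C : Finset A, IsChain (· ≤ ·) (C : Set A) ∧ C.card = d + 1) ∧
  (∀ C : Finset A, IsChain (· ≤ ·) (C : Set A) → C.card ≤ d + 1)

/-- An upper set of the poset `(K, ⊆)`. -/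
def UpperSetOf {n : ℕ} (K U : Set (Set (Fin n → ℝ))) : Prop :=
  U ⊆ K ∧ ∀ s ∈ U, ∀ t ∈ K, s ⊆ t → t ∈ U

/-- The map sending an upper set of a triangulation to the union of the relative
interiors of its members. -/
def gammaUp {n : ℕ} (U : Set (Set (Fin n → ℝ))) : Set (Fin n → ℝ) :=
  ⋃ s ∈ U, intrinsicInterior ℝ s

/-!
Write `conv V ∩ conv W` as the image, under `l ↦ ∑ l_v v`, of the set of weights
`l ≥ 0` on `V ⊕ W` that are convex weights on each of `V` and `W` and have the same barycenter
on both. This lifted set is cut out of the orthant by linear equations, so an extreme point is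
determined by its zero set: if two had the same zero set, moving along their difference would
keep the point in the set in both directions. Hence it has finitely many extreme points, and
being compact and convex it is their convex hull (Krein–Milman); its image is then the convex
hull of finitely many points. Polyhedra intersect piece by piece.
-/

open Filter Topology

theorem finite_extremePoints_nonneg_inter_preimage {ι F : Type*} [Finite ι] [AddCommGroup F]
    [Module ℝ F] (G : (ι → ℝ) →ₗ[ℝ] F) (b : F) :
    ((Ici 0 ∩ G ⁻¹' {b}).extremePoints ℝ).Finite := by
  refine Finite.of_finite_image (f := fun x => {i | x i = 0}) (toFinite _) ?_
  rintro x ⟨⟨hx0, hxb : G x = b⟩, hxext⟩ y ⟨⟨-, hyb : G y = b⟩, -⟩ hxy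
  have hzero : ∀ i, x i = 0 → y i = 0 := fun i => (Set.ext_iff.1 hxy i).1
  have hnear : ∀ᶠ t : ℝ in 𝓝 0, 0 ≤ x + t • (x - y) := by
    simp only [Pi.le_def, eventually_all]
    intro i
    rcases (hx0 i).eq_or_lt with h | h
    · simp [← h, hzero i h.symm]
    · have hcont : Continuous fun t : ℝ => x i + t * (x i - y i) := by fun_prop
      exact ((hcont.tendsto' 0 (x i) (by simp)).eventually (eventually_gt_nhds h)).mono
        fun t ht => by simpa using ht.le
  obtain ⟨ε, hε, hball⟩ := Metric.eventually_nhds_iff.1 hnear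
  have hmem : ∀ t : ℝ, |t| < ε → x + t • (x - y) ∈ Ici 0 ∩ G ⁻¹' {b} := fun t ht =>
    ⟨hball (by simpa using ht), by simp [hxb, hyb]⟩
  have hε2 : |ε / 2| < ε := by rw [abs_of_pos (half_pos hε)]; linarith
  have hseg : x ∈ openSegment ℝ (x + (ε / 2) • (x - y)) (x + (-(ε / 2)) • (x - y)) :=
    ⟨1 / 2, 1 / 2, by norm_num, by norm_num, by norm_num, by module⟩
  have hfix := hxext (hmem _ hε2) (hmem _ (by rwa [abs_neg])) hseg
  rw [add_eq_left, smul_eq_zero, sub_eq_zero] at hfix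
  exact hfix.resolve_left (half_pos hε).ne'

theorem convexHull_extremePoints_eq_of_finite {E : Type*} [AddCommGroup E] [Module ℝ E]
    [TopologicalSpace E] [T2Space E] [IsTopologicalAddGroup E] [ContinuousSMul ℝ E]
    [LocallyConvexSpace ℝ E] {s : Set E} (hcomp : IsCompact s) (hconv : Convex ℝ s)
    (hfin : (s.extremePoints ℝ).Finite) :
    convexHull ℝ (s.extremePoints ℝ) = s := by
  have h := closure_convexHull_extremePoints hcomp hconv
  rwa [(hfin.isCompact_convexHull ℝ).isClosed.closure_eq] at h

theorem Finset.mem_convexHull_iff_exists_weights {E : Type*} [AddCommGroup E] [Module ℝ E]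
    {V : Finset E} {x : E} :
    x ∈ convexHull ℝ (V : Set E) ↔
      ∃ a : V → ℝ, (∀ v, 0 ≤ a v) ∧ ∑ v, a v = 1 ∧ ∑ v, a v • (v : E) = x := by
  refine ⟨fun hx => ?_, fun ⟨a, ha0, ha1, hax⟩ =>
    mem_convexHull_of_exists_fintype a (↑) ha0 ha1 (fun v => v.2) hax⟩
  obtain ⟨w, hw0, hw1, hwx⟩ := Finset.mem_convexHull'.1 hx
  exact ⟨fun v => w v, fun v => hw0 v v.2, by rwa [Finset.sum_coe_sort V w],
    by rwa [Finset.sum_coe_sort V (fun v => w v • v)]⟩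

namespace ConvexHullInter

variable {E : Type*} [AddCommGroup E] [Module ℝ E] (V W : Finset E)

def constraint : (V ⊕ W → ℝ) →ₗ[ℝ] E × ℝ × ℝ :=
  Fintype.linearCombination ℝ (Sum.elim (fun v => ((v : E), 1, 0)) fun w => (-(w : E), 0, 1))

def lift : Set (V ⊕ W → ℝ) := Ici 0 ∩ constraint V W ⁻¹' {(0, 1, 1)}

def proj : (V ⊕ W → ℝ) →ₗ[ℝ] E := Fintype.linearCombination ℝ (Sum.elim (↑) 0)

variable {V W}

theorem constraint_apply (l : V ⊕ W → ℝ) :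
    constraint V W l = (∑ v, l (.inl v) • (v : E) - ∑ w, l (.inr w) • (w : E),
      ∑ v, l (.inl v), ∑ w, l (.inr w)) := by
  simp [constraint, Fintype.linearCombination_apply, Fintype.sum_sum_type, Prod.ext_iff,
    Prod.fst_sum, Prod.snd_sum, sub_eq_add_neg]

theorem mem_lift {l : V ⊕ W → ℝ} : l ∈ lift V W ↔ 0 ≤ l ∧ ∑ v, l (.inl v) = 1 ∧
    ∑ w, l (.inr w) = 1 ∧ ∑ v, l (.inl v) • (v : E) = ∑ w, l (.inr w) • (w : E) := by
  simp [lift, constraint_apply, Prod.ext_iff, sub_eq_zero, and_comm, and_assoc]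

theorem proj_apply (l : V ⊕ W → ℝ) : proj V W l = ∑ v, l (.inl v) • (v : E) := by
  simp [proj, Fintype.linearCombination_apply, Fintype.sum_sum_type]

theorem proj_image_lift :
    proj V W '' lift V W = convexHull ℝ (V : Set E) ∩ convexHull ℝ (W : Set E) := by
  ext x
  simp only [mem_image, mem_lift, proj_apply, mem_inter_iff,
    Finset.mem_convexHull_iff_exists_weights]
  constructor
  · rintro ⟨l, ⟨hl0, hV, hW, hVW⟩, rfl⟩
    exact ⟨⟨_, fun v => hl0 _, hV, rfl⟩, ⟨_, fun w => hl0 _, hW, hVW.symm⟩⟩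
  · rintro ⟨⟨a, ha0, ha1, rfl⟩, ⟨b, hb0, hb1, hbx⟩⟩
    exact ⟨Sum.elim a b, ⟨fun i => i.rec ha0 hb0, ha1, hb1, hbx.symm⟩, rfl⟩

theorem convex_lift : Convex ℝ (lift V W) :=
  (convex_Ici 0).inter ((convex_singleton _).linear_preimage _)

theorem isCompact_lift [TopologicalSpace E] [T2Space E] [IsTopologicalAddGroup E]
    [ContinuousSMul ℝ E] : IsCompact (lift V W) := by
  have hclosed : IsClosed (lift V W) := isClosed_Ici.inter
    (isClosed_singleton.preimage (constraint V W).continuous_of_finiteDimensional)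
  refine (isCompact_Icc (b := 1)).of_isClosed_subset hclosed fun l hl => ⟨hl.1, ?_⟩
  obtain ⟨hl0, hV, hW, -⟩ := mem_lift.1 hl
  rintro (v | w)
  · exact (Finset.single_le_sum (fun v _ => hl0 (.inl v)) (Finset.mem_univ v)).trans_eq hV
  · exact (Finset.single_le_sum (fun w _ => hl0 (.inr w)) (Finset.mem_univ w)).trans_eq hW

end ConvexHullInter

open ConvexHullInter in
theorem exists_finset_convexHull_inter_eq {E : Type*} [AddCommGroup E] [Module ℝ E]
    [TopologicalSpace E] [T2Space E] [IsTopologicalAddGroup E] [ContinuousSMul ℝ E]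
    (V W : Finset E) :
    ∃ U : Finset E, convexHull ℝ (V : Set E) ∩ convexHull ℝ (W : Set E) = convexHull ℝ U := by
  have hfin : ((lift V W).extremePoints ℝ).Finite :=
    finite_extremePoints_nonneg_inter_preimage (constraint V W) (0, 1, 1)
  refine ⟨(hfin.image (proj V W)).toFinset, ?_⟩
  rw [Finite.coe_toFinset, ← LinearMap.image_convexHull,
    convexHull_extremePoints_eq_of_finite isCompact_lift convex_lift hfin, proj_image_lift]

theorem IsPolytope.inter {n : ℕ} {s t : Set (Fin n → ℝ)} (hs : IsPolytope s)
    (ht : IsPolytope t) : IsPolytope (s ∩ t) := by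
  obtain ⟨V, rfl⟩ := hs
  obtain ⟨W, rfl⟩ := ht
  exact (exists_finset_convexHull_inter_eq V W).imp fun _ => id

/-- If `A` and `B` are polyhedra in ℝⁿ, then `A ∩ B` is a polyhedron in ℝⁿ. -/
theorem polyhedron_inter {n : ℕ} {A B : Set (Fin n → ℝ)}
    (hA : IsPolyhedron A) (hB : IsPolyhedron B) :
    IsPolyhedron (A ∩ B) := by
  obtain ⟨S, hSfin, hSpoly, rfl⟩ := hA
  obtain ⟨T, hTfin, hTpoly, rfl⟩ := hB
  refine ⟨image2 (· ∩ ·) S T, hSfin.image2 _ hTfin, ?_, ?_⟩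
  · rintro _ ⟨s, hs, t, ht, rfl⟩
    exact (hSpoly s hs).inter (hTpoly t ht)
  · rw [sUnion_inter_sUnion, ← image_uncurry_prod, sUnion_image]
    rfl
end

section
/- Let Σ be a triangulation of a polyhedron P ⊆ ℝⁿ (i.e. ⋃Σ = P), let Q ⊆ P be a polyhedron, and suppose Σ_Q := {σ ∈ Σ : σ ⊆ Q} triangulates Q (i.e. ⋃Σ_Q = Q). Put Σ* := {σ ∈ Σ : there exists τ ∈ Σ with τ ⊄ Q and σ a face of τ}. Then cl(P \ Q) = ⋃Σ*; in particular, cl(P \ Q) is a polyhedron. -/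
open Set

/-!
Let `t ∈ K` with `t ⊄ Q`, and pick `y ∈ t \ Q`. For any `x ∈ t`, the open segment from `x` to `y`
misses `Q`: a simplex `s ⊆ Q` of `K` meets `t` in a face of `t`, faces of a simplex are extreme
subsets, so a face meeting that open segment would contain `y`. Hence `t ⊆ cl (t \ Q)`, and so
`cl (P \ Q)` contains every face of such a `t`. Conversely the union of these faces is closed and
covers `P \ Q`, since every point of `P \ Q` lies in a simplex of `K` not contained in `Q`.
-/

theorem AffineIndependent.isExtreme_convexHull_of_subset {𝕜 E : Type*} [Field 𝕜] [LinearOrder 𝕜]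
    [IsStrictOrderedRing 𝕜] [AddCommGroup E] [Module 𝕜 E] {W V : Finset E}
    (hW : AffineIndependent 𝕜 ((↑) : W → E)) (hVW : V ⊆ W) :
    IsExtreme 𝕜 (convexHull 𝕜 (W : Set E)) (convexHull 𝕜 (V : Set E)) := by
  refine ⟨convexHull_mono (Finset.coe_subset.2 hVW), ?_⟩
  rintro x hx y hy z hz ⟨p, q, hp, hq, hpq, rfl⟩
  obtain ⟨a, ha₀, ha₁, rfl⟩ := Finset.mem_convexHull'.1 hx
  obtain ⟨b, hb₀, hb₁, rfl⟩ := Finset.mem_convexHull'.1 hy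
  obtain ⟨c, -, hc₁, hcz⟩ := Finset.mem_convexHull'.1 hz
  -- Both sides are barycentric coordinates of `z` with respect to `W`.
  have hcoord : ∀ w ∈ W, p * a w + q * b w = (V : Set E).indicator c w := by
    refine hW.eq_of_sum_eq_sum_subtype ?_ ?_
    · rw [Finset.sum_indicator_subset _ hVW, hc₁, Finset.sum_add_distrib, ← Finset.mul_sum,
        ← Finset.mul_sum, ha₁, hb₁, mul_one, mul_one, hpq]
    · calc ∑ w ∈ W, (p * a w + q * b w) • w
            = p • ∑ w ∈ W, a w • w + q • ∑ w ∈ W, b w • w := by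
              simp only [add_smul, mul_smul, Finset.sum_add_distrib, Finset.smul_sum]
          _ = ∑ w ∈ V, c w • w := hcz.symm
          _ = ∑ w ∈ W, (V : Set E).indicator c w • w :=
              (Finset.sum_indicator_subset_of_eq_zero c (fun w r => r • w) hVW
                fun _ => zero_smul _ _).symm
  have ha_off : ∀ w ∈ W, w ∉ V → a w = 0 := by
    intro w hw hwV
    have hzero := hcoord w hw
    rw [Set.indicator_of_notMem (by simpa using hwV)] at hzero
    have hpa := ((add_eq_zero_iff_of_nonneg (mul_nonneg hp.le (ha₀ w hw))
      (mul_nonneg hq.le (hb₀ w hw))).1 hzero).1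
    exact (mul_eq_zero.1 hpa).resolve_left hp.ne'
  refine Finset.mem_convexHull'.2 ⟨a, fun w hw => ha₀ w (hVW hw), ?_, ?_⟩
  · rwa [Finset.sum_subset hVW fun w hw hwV => ha_off w hw hwV]
  · rw [Finset.sum_subset hVW fun w hw hwV => by rw [ha_off w hw hwV, zero_smul]]

theorem IsFaceOf.isExtreme {n : ℕ} {s t : Set (Fin n → ℝ)} (h : IsFaceOf s t) :
    IsExtreme ℝ t s := by
  obtain ⟨W, V, -, hW, rfl, -, hVW, rfl⟩ := h
  exact hW.isExtreme_convexHull_of_subset hVW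

theorem IsSimplex.isFaceOf_self {n : ℕ} {s : Set (Fin n → ℝ)} (h : IsSimplex s) :
    IsFaceOf s s := by
  obtain ⟨V, hV, hVi, hs⟩ := h
  exact ⟨V, V, hV, hVi, hs, hV, subset_rfl, hs⟩

theorem IsSimplex.isPolytope {n : ℕ} {s : Set (Fin n → ℝ)} (h : IsSimplex s) :
    IsPolytope s := by
  obtain ⟨V, -, -, hs⟩ := h
  exact ⟨V, hs⟩

theorem IsPolytope.isClosed {n : ℕ} {s : Set (Fin n → ℝ)} (h : IsPolytope s) : IsClosed s := by
  obtain ⟨V, rfl⟩ := h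
  exact V.finite_toSet.isClosed_convexHull ℝ

theorem IsPolytope.convex {n : ℕ} {s : Set (Fin n → ℝ)} (h : IsPolytope s) : Convex ℝ s := by
  obtain ⟨V, rfl⟩ := h
  exact convex_convexHull ℝ _

theorem IsTriangulation.subset_closure_sdiff {n : ℕ} {K : Set (Set (Fin n → ℝ))}
    (hK : IsTriangulation K) {Q : Set (Fin n → ℝ)} (hQ : Q ⊆ ⋃₀ {s ∈ K | s ⊆ Q})
    {t : Set (Fin n → ℝ)} (ht : t ∈ K) (htQ : ¬ t ⊆ Q) :
    t ⊆ closure (t \ Q) := by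
  obtain ⟨y, hyt, hyQ⟩ := not_subset.1 htQ
  intro x hxt
  have hseg : openSegment ℝ x y ⊆ t \ Q := by
    intro z hz
    have hzt : z ∈ t := (hK.simplex t ht).isPolytope.convex.openSegment_subset hxt hyt hz
    refine ⟨hzt, fun hzQ => ?_⟩
    obtain ⟨s, ⟨hs, hsQ⟩, hzs⟩ := hQ hzQ
    rcases hK.inter s hs t ht with hst | ⟨-, hface⟩
    · exact eq_empty_iff_forall_notMem.1 hst z ⟨hzs, hzt⟩
    · exact hyQ (hsQ (hface.isExtreme.right_mem_of_mem_openSegment hxt hyt ⟨hzs, hzt⟩ hz).1)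
  exact closure_mono hseg (segment_subset_closure_openSegment (left_mem_segment ℝ x y))

theorem closure_diff_eq_sUnion_general {n : ℕ} (K : Set (Set (Fin n → ℝ))) (hK : IsTriangulation K)
    (P Q : Set (Fin n → ℝ)) (hP : ⋃₀ K = P)
    (hQ : ⋃₀ {s ∈ K | s ⊆ Q} = Q) :
    closure (P \ Q) = ⋃₀ {s ∈ K | ∃ t ∈ K, ¬ t ⊆ Q ∧ IsFaceOf s t} ∧
    IsPolyhedron (closure (P \ Q)) := by
  set S : Set (Set (Fin n → ℝ)) := {s ∈ K | ∃ t ∈ K, ¬ t ⊆ Q ∧ IsFaceOf s t}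
  have hSK : S ⊆ K := fun s hs => hs.1
  have hSfin : S.Finite := hK.finite.subset hSK
  have hPQ : P \ Q ⊆ ⋃₀ S := by
    rintro x ⟨hxP, hxQ⟩
    obtain ⟨s, hs, hxs⟩ := hP.symm ▸ hxP
    exact ⟨s, ⟨hs, s, hs, fun h => hxQ (h hxs), (hK.simplex s hs).isFaceOf_self⟩, hxs⟩
  have hSPQ : ⋃₀ S ⊆ closure (P \ Q) := by
    rintro x ⟨s, ⟨-, t, ht, htQ, hst⟩, hxs⟩
    have htP : t ⊆ P := hP ▸ subset_sUnion_of_mem ht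
    exact closure_mono (sdiff_subset_sdiff_left htP)
      (hK.subset_closure_sdiff hQ.ge ht htQ (hst.isExtreme.subset hxs))
  have hclosed : IsClosed (⋃₀ S) := by
    rw [sUnion_eq_biUnion]
    exact hSfin.isClosed_biUnion fun s hs => (hK.simplex s (hSK hs)).isPolytope.isClosed
  have heq := (closure_minimal hPQ hclosed).antisymm hSPQ
  exact ⟨heq, heq ▸ ⟨S, hSfin, fun s hs => (hK.simplex s (hSK hs)).isPolytope, rfl⟩⟩

/-- Let `K` triangulate the polyhedron `P`, let `Q ⊆ P` be a polyhedron
triangulated by `{s ∈ K : s ⊆ Q}`. Then `cl (P \ Q)` equals the union of all simplices of `K`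
that are faces of some simplex not contained in `Q`; in particular `cl (P \ Q)` is a
polyhedron. -/
theorem closure_diff_eq_sUnion {n : ℕ} (K : Set (Set (Fin n → ℝ))) (hK : IsTriangulation K)
    (P Q : Set (Fin n → ℝ)) (hP : ⋃₀ K = P)
    (hQpoly : IsPolyhedron Q) (hQP : Q ⊆ P)
    (hQ : ⋃₀ {s ∈ K | s ⊆ Q} = Q) :
    closure (P \ Q) = ⋃₀ {s ∈ K | ∃ t ∈ K, ¬ t ⊆ Q ∧ IsFaceOf s t} ∧
    IsPolyhedron (closure (P \ Q)) :=
  closure_diff_eq_sUnion_general K hK P Q hP hQ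
end

section
/- If Q₁ and Q₂ are polyhedra in ℝⁿ, then cl(Q₂ \ Q₁) is a polyhedron in ℝⁿ. -/
open Set

/-!
Each polytope is a finite union of simplices, and a simplex is cut out by finitely many closed
half-spaces (barycentric coordinates of an affine basis extending its vertices). Hence `Q₁ᶜ` is a
finite union of finite intersections `U` of open half-spaces, and `cl (Q₂ \ Q₁)` is the finite union
of the sets `cl (P ∩ U)` for the polytopes `P` making up `Q₂`. If `P ∩ U` is nonempty, its closure
is `P` intersected with the closed half-spaces of `U`. Finally, a polytope `conv V` cut by a
half-space `{g ≤ 0}` is the polytope spanned by the vertices with `g ≤ 0` and the points where the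
segments between vertices of opposite sign cross `g = 0`. Indeed, a point of the cut lies on a
segment `[p, q]` with `p` in the hull of the vertices where `g ≤ 0` and `q` in the hull of the
others, hence between `p` and the crossing point `c p q` of that segment; and in each argument
separately `c` is a perspective map (an affine map divided by a positive affine function), which
sends convex hulls into convex hulls.
-/

section Perspective

variable {𝕜 E F : Type*} [Field 𝕜] [LinearOrder 𝕜] [IsStrictOrderedRing 𝕜]
  [AddCommGroup E] [Module 𝕜 E] [AddCommGroup F] [Module 𝕜 F]

theorem mapsTo_convexHull_perspective {s : Set E} (A : E →ᵃ[𝕜] F) (d : E →ᵃ[𝕜] 𝕜)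
    (hd : ∀ z ∈ s, 0 < d z) :
    MapsTo (fun y => (d y)⁻¹ • A y) (convexHull 𝕜 s)
      (convexHull 𝕜 ((fun y => (d y)⁻¹ • A y) '' s)) := by
  set f := fun y => (d y)⁻¹ • A y
  suffices convexHull 𝕜 s ⊆ {y | 0 < d y ∧ f y ∈ convexHull 𝕜 (f '' s)} from
    fun y hy => (this hy).2
  refine convexHull_min (fun z hz => ⟨hd z hz, subset_convexHull 𝕜 _ (mem_image_of_mem f hz)⟩) ?_
  rintro y₁ ⟨h₁, m₁⟩ y₂ ⟨h₂, m₂⟩ a b ha hb hab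
  have hd' : d (a • y₁ + b • y₂) = a * d y₁ + b * d y₂ := Convex.combo_affine_apply hab
  have hA' : A (a • y₁ + b • y₂) = a • A y₁ + b • A y₂ := Convex.combo_affine_apply hab
  have hpos : 0 < a * d y₁ + b * d y₂ := by
    rcases ha.eq_or_lt with rfl | ha'
    · rw [zero_add] at hab; simp [hab, h₂]
    · exact add_pos_of_pos_of_nonneg (mul_pos ha' h₁) (mul_nonneg hb h₂.le)
  refine ⟨hd' ▸ hpos, ?_⟩
  have key : f (a • y₁ + b • y₂) = (a * d y₁ / (a * d y₁ + b * d y₂)) • f y₁ +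
      (b * d y₂ / (a * d y₁ + b * d y₂)) • f y₂ := by
    simp only [f, hd', hA', smul_add, smul_smul]
    congr 2 <;> field_simp
  rw [key]
  exact convex_convexHull 𝕜 _ m₁ m₂ (by positivity) (by positivity) (by field_simp)

end Perspective

section Crossing

variable {𝕜 E : Type*} [Field 𝕜] [AddCommGroup E] [Module 𝕜 E]

/-- The point where the line through `p` and `q` meets the hyperplane `g = 0`. -/
def crossing (g : E →ᵃ[𝕜] 𝕜) (p q : E) : E := (g q - g p)⁻¹ • (g q • p - g p • q)

variable {g : E →ᵃ[𝕜] 𝕜} {p q x : E}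

theorem crossing_eq_lineMap (h : g p ≠ g q) :
    crossing g p q = AffineMap.lineMap p q (g p / (g p - g q)) := by
  have h₁ : g q - g p ≠ 0 := sub_ne_zero.2 h.symm
  have h₂ : g p - g q ≠ 0 := sub_ne_zero.2 h
  rw [AffineMap.lineMap_apply_module, crossing, smul_sub, smul_smul, smul_smul, sub_eq_add_neg,
    ← neg_smul]
  congr 2 <;> field_simp <;> ring

theorem apply_crossing_eq_zero (h : g p ≠ g q) : g (crossing g p q) = 0 := by
  have h₂ : g p - g q ≠ 0 := sub_ne_zero.2 h
  rw [crossing_eq_lineMap h, AffineMap.apply_lineMap, AffineMap.lineMap_apply_ring']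
  field_simp
  ring

theorem crossing_left_eq_perspective (g : E →ᵃ[𝕜] 𝕜) (q : E) : (crossing g · q) = fun p =>
    ((AffineMap.const 𝕜 E (g q) - g) p)⁻¹ •
      ((g q • AffineMap.id 𝕜 E - (AffineMap.lineMap 0 q).comp g) p) := by
  funext p
  simp [crossing, AffineMap.lineMap_apply_module]

theorem crossing_right_eq_perspective (g : E →ᵃ[𝕜] 𝕜) (p : E) : crossing g p = fun q =>
    ((g - AffineMap.const 𝕜 E (g p)) q)⁻¹ •
      (((AffineMap.lineMap 0 p).comp g - g p • AffineMap.id 𝕜 E) q) := by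
  funext q
  simp [crossing, AffineMap.lineMap_apply_module]

variable [LinearOrder 𝕜] [IsStrictOrderedRing 𝕜]

theorem convex_setOf_nonpos (g : E →ᵃ[𝕜] 𝕜) : Convex 𝕜 {x | g x ≤ 0} :=
  (convex_Iic 0).affine_preimage g

theorem convex_setOf_pos (g : E →ᵃ[𝕜] 𝕜) : Convex 𝕜 {x | 0 < g x} :=
  (convex_Ioi 0).affine_preimage g

theorem crossing_mem_segment (hp : g p ≤ 0) (hq : 0 < g q) :
    crossing g p q ∈ segment 𝕜 p q := by
  rw [crossing_eq_lineMap (by linarith), segment_eq_image_lineMap]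
  exact mem_image_of_mem _ ⟨div_nonneg_of_nonpos hp (by linarith),
    (div_le_one_of_neg (by linarith)).2 (by linarith)⟩

theorem mem_segment_crossing (hp : g p ≤ 0) (hq : 0 < g q) (hx : x ∈ segment 𝕜 p q)
    (hgx : g x ≤ 0) : x ∈ segment 𝕜 p (crossing g p q) := by
  rw [segment_eq_image_lineMap] at hx
  obtain ⟨t, ⟨ht₀, ht₁⟩, rfl⟩ := hx
  rcases ht₀.eq_or_lt with rfl | ht₀
  · simpa using left_mem_segment 𝕜 p (crossing g p q)
  have hc : t ≤ g p / (g p - g q) := by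
    rw [AffineMap.apply_lineMap, AffineMap.lineMap_apply_ring'] at hgx
    rw [le_div_iff_of_neg (by linarith)]
    linarith
  rw [crossing_eq_lineMap (by linarith), segment_eq_image_lineMap]
  refine ⟨t / (g p / (g p - g q)),
    ⟨div_nonneg ht₀.le (ht₀.le.trans hc), (div_le_one (by linarith)).2 hc⟩, ?_⟩
  rw [AffineMap.lineMap_lineMap_right, div_mul_cancel₀ _ (by linarith)]

theorem crossing_mem_convexHull_image2 {N P : Set E} (hN : ∀ a ∈ N, g a ≤ 0)
    (hP : ∀ b ∈ P, 0 < g b) (hp : p ∈ convexHull 𝕜 N) (hq : q ∈ convexHull 𝕜 P) :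
    crossing g p q ∈ convexHull 𝕜 (image2 (crossing g) N P) := by
  have hgq : 0 < g q := convexHull_min hP (convex_setOf_pos g) hq
  have hright : ∀ a ∈ N, crossing g a q ∈ convexHull 𝕜 (image2 (crossing g) N P) := by
    intro a ha
    have h := mapsTo_convexHull_perspective
      ((AffineMap.lineMap 0 a).comp g - g a • AffineMap.id 𝕜 E) (g - AffineMap.const 𝕜 E (g a))
      (fun b hb => by simpa using (hN a ha).trans_lt (hP b hb))
    rw [← crossing_right_eq_perspective] at h
    exact convexHull_mono (image_subset_image2_right ha) (h hq)
  have h := mapsTo_convexHull_perspective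
    (g q • AffineMap.id 𝕜 E - (AffineMap.lineMap 0 q).comp g) (AffineMap.const 𝕜 E (g q) - g)
    (fun a ha => by simpa using (hN a ha).trans_lt hgq)
  rw [← crossing_left_eq_perspective] at h
  exact convexHull_min (image_subset_iff.2 hright) (convex_convexHull 𝕜 _) (h hp)

theorem convexHull_inter_setOf_nonpos (g : E →ᵃ[𝕜] 𝕜) (s : Set E) :
    convexHull 𝕜 s ∩ {x | g x ≤ 0} = convexHull 𝕜 ({x ∈ s | g x ≤ 0} ∪
      image2 (crossing g) {x ∈ s | g x ≤ 0} {x ∈ s | 0 < g x}) := by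
  set N := {x ∈ s | g x ≤ 0}
  set P := {x ∈ s | 0 < g x}
  refine Subset.antisymm ?_
    (convexHull_min ?_ ((convex_convexHull 𝕜 s).inter (convex_setOf_nonpos g)))
  · rintro x ⟨hx, hgx⟩
    have hs : s = N ∪ P := by ext y; simp [N, P, ← and_or_left, le_or_gt]
    rcases N.eq_empty_or_nonempty with hN | hN
    · have : 0 < g x := convexHull_min (fun y hy => (hs ▸ hy).elim (by simp [hN]) And.right)
        (convex_setOf_pos g) hx
      exact absurd hgx (not_le.2 this)
    rcases P.eq_empty_or_nonempty with hP | hP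
    · rw [hs, hP, union_empty] at hx
      exact convexHull_mono subset_union_left hx
    rw [hs, convexHull_union hN hP, mem_convexJoin] at hx
    obtain ⟨p, hp, q, hq, hxpq⟩ := hx
    have hgp : g p ≤ 0 := convexHull_min (fun _ h => h.2) (convex_setOf_nonpos g) hp
    have hgq : 0 < g q := convexHull_min (fun _ h => h.2) (convex_setOf_pos g) hq
    exact (convex_convexHull 𝕜 _).segment_subset (convexHull_mono subset_union_left hp)
      (convexHull_mono subset_union_right
        (crossing_mem_convexHull_image2 (fun _ h => h.2) (fun _ h => h.2) hp hq))
      (mem_segment_crossing hgp hgq hxpq hgx)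
  · rintro _ (⟨hx, hgx⟩ | ⟨a, ⟨ha, hga⟩, b, ⟨hb, hgb⟩, rfl⟩)
    · exact ⟨subset_convexHull 𝕜 s hx, hgx⟩
    · exact ⟨segment_subset_convexHull ha hb (crossing_mem_segment hga hgb),
        (apply_crossing_eq_zero (hga.trans_lt hgb).ne).le⟩

end Crossing

section HalfSpaces

variable {𝕜 E : Type*} [Field 𝕜] [LinearOrder 𝕜] [IsStrictOrderedRing 𝕜]
  [AddCommGroup E] [Module 𝕜 E]

theorem Set.Finite.exists_convexHull_eq_inter_setOf_nonpos {s : Set E} (hs : s.Finite)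
    {G : Set (E →ᵃ[𝕜] 𝕜)} (hG : G.Finite) :
    ∃ t : Set E, t.Finite ∧ convexHull 𝕜 t = convexHull 𝕜 s ∩ {x | ∀ g ∈ G, g x ≤ 0} := by
  induction G, hG using Set.Finite.induction_on with
  | empty => exact ⟨s, hs, by simp⟩
  | @insert g G _ _ ih =>
    obtain ⟨t, ht, heq⟩ := ih
    refine ⟨{x ∈ t | g x ≤ 0} ∪ image2 (crossing g) {x ∈ t | g x ≤ 0} {x ∈ t | 0 < g x},
      (ht.sep _).union ((ht.sep _).image2 _ (ht.sep _)), ?_⟩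
    rw [← convexHull_inter_setOf_nonpos, heq, inter_assoc]
    congr 1
    ext x
    simp [and_comm]

theorem convex_setOf_forall_nonpos (G : Set (E →ᵃ[𝕜] 𝕜)) :
    Convex 𝕜 {x | ∀ g ∈ G, g x ≤ 0} := by
  simpa only [ofPred_forall] using convex_iInter₂ fun g _ => convex_setOf_nonpos g

theorem AffineIndependent.exists_convexHull_eq_setOf_nonpos [FiniteDimensional 𝕜 E]
    {T : Set E} (hT : AffineIndependent 𝕜 ((↑) : T → E)) :
    ∃ G : Set (E →ᵃ[𝕜] 𝕜), G.Finite ∧ convexHull 𝕜 T = {x | ∀ g ∈ G, g x ≤ 0} := by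
  classical
  obtain ⟨s, hTs, hs, hspan⟩ := exists_subset_affineIndependent_affineSpan_eq_top hT
  have : Fintype s := (finite_set_of_fin_dim_affineIndependent 𝕜 hs).fintype
  let b : AffineBasis s 𝕜 E := ⟨(↑), hs, by rwa [Subtype.range_coe]⟩
  refine ⟨range (fun i => -b.coord i) ∪ (fun i => b.coord i) '' {i | i.1 ∉ T},
    (finite_range _).union ((toFinite _).image _), Subset.antisymm ?_ ?_⟩
  · refine convexHull_min (fun v hv g hg => ?_) (convex_setOf_forall_nonpos _)
    have hvb : v = b ⟨v, hTs hv⟩ := rfl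
    rcases hg with ⟨i, rfl⟩ | ⟨i, hi, rfl⟩
    · rw [hvb, AffineMap.coe_neg, Pi.neg_apply, b.coord_apply]
      split_ifs <;> norm_num
    · rw [hvb, b.coord_apply_ne fun h => hi (by rw [h]; exact hv)]
  · intro x hx
    have h₀ : ∀ i, 0 ≤ b.coord i x := fun i => by simpa using hx _ (Or.inl ⟨i, rfl⟩)
    have hsupp : ∀ i, b.coord i x ≠ 0 → i.1 ∈ T := fun i hi => by
      by_contra h
      exact hi (le_antisymm (hx _ (Or.inr ⟨i, h, rfl⟩)) (h₀ i))
    have hsum : ∑ i, b.coord i x = 1 := b.sum_coord_apply_eq_one x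
    rw [← b.affineCombination_coord_eq_self x, affineCombination_eq_centerMass hsum,
      ← Finset.centerMass_filter_ne_zero]
    exact Finset.centerMass_mem_convexHull _ (fun i _ => h₀ i)
      (by rw [Finset.sum_filter_ne_zero, hsum]; exact one_pos)
      fun i hi => hsupp i (Finset.mem_filter.1 hi).2

end HalfSpaces

section OpenPolyhedral

variable (𝕜 : Type*) {E : Type*} [Field 𝕜] [LinearOrder 𝕜] [AddCommGroup E] [Module 𝕜 E]

def IsOpenPolyhedral (U : Set E) : Prop :=
  ∃ 𝓕 : Set (Set (E →ᵃ[𝕜] 𝕜)), 𝓕.Finite ∧ (∀ F ∈ 𝓕, F.Finite) ∧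
    U = ⋃ F ∈ 𝓕, {x | ∀ f ∈ F, f x < 0}

variable {𝕜}

theorem isOpenPolyhedral_univ : IsOpenPolyhedral 𝕜 (univ : Set E) :=
  ⟨{∅}, finite_singleton _, by simp, by simp⟩

theorem IsOpenPolyhedral.inter {U V : Set E} (hU : IsOpenPolyhedral 𝕜 U)
    (hV : IsOpenPolyhedral 𝕜 V) : IsOpenPolyhedral 𝕜 (U ∩ V) := by
  obtain ⟨𝓕, h𝓕, hF, rfl⟩ := hU
  obtain ⟨𝓖, h𝓖, hG, rfl⟩ := hV
  refine ⟨image2 (· ∪ ·) 𝓕 𝓖, h𝓕.image2 _ h𝓖, ?_, ?_⟩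
  · rintro _ ⟨F, hF', G, hG', rfl⟩
    exact (hF F hF').union (hG G hG')
  · ext x
    simp only [mem_inter_iff, mem_iUnion, mem_image2, exists_prop, mem_ofPred_eq]
    constructor
    · rintro ⟨⟨F, hF', hxF⟩, G, hG', hxG⟩
      exact ⟨F ∪ G, ⟨F, hF', G, hG', rfl⟩, fun f hf => hf.elim (hxF f) (hxG f)⟩
    · rintro ⟨_, ⟨F, hF', G, hG', rfl⟩, hx⟩
      exact ⟨⟨F, hF', fun f hf => hx f (.inl hf)⟩, G, hG', fun f hf => hx f (.inr hf)⟩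

theorem IsOpenPolyhedral.biInter {ι : Type*} {I : Set ι} (hI : I.Finite) {U : ι → Set E}
    (h : ∀ i ∈ I, IsOpenPolyhedral 𝕜 (U i)) : IsOpenPolyhedral 𝕜 (⋂ i ∈ I, U i) := by
  induction I, hI using Set.Finite.induction_on with
  | empty => simpa using isOpenPolyhedral_univ
  | @insert i I _ _ ih =>
    rw [biInter_insert]
    exact (h i (mem_insert i I)).inter (ih fun j hj => h j (mem_insert_of_mem i hj))

variable [IsStrictOrderedRing 𝕜]

theorem isOpenPolyhedral_compl_setOf_nonpos {G : Set (E →ᵃ[𝕜] 𝕜)} (hG : G.Finite) :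
    IsOpenPolyhedral 𝕜 {x | ∀ g ∈ G, g x ≤ 0}ᶜ :=
  ⟨(fun g => {-g}) '' G, hG.image _, by simp, by ext x; simp⟩

theorem isOpenPolyhedral_compl_convexHull [FiniteDimensional 𝕜 E] (V : Finset E) :
    IsOpenPolyhedral 𝕜 (convexHull 𝕜 (V : Set E))ᶜ := by
  have hV : convexHull 𝕜 (V : Set E) = ⋃ t ∈ {t : Finset E | t ⊆ V ∧
      AffineIndependent 𝕜 ((↑) : t → E)}, convexHull 𝕜 (t : Set E) := by
    rw [convexHull_eq_union]
    simp [iUnion_and]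
  rw [hV, compl_iUnion₂]
  refine .biInter (V.powerset.finite_toSet.subset fun t ht => by simpa using ht.1) fun t ht => ?_
  obtain ⟨G, hG, heq⟩ := ht.2.exists_convexHull_eq_setOf_nonpos
  rw [heq]
  exact isOpenPolyhedral_compl_setOf_nonpos hG

end OpenPolyhedral

section Closure

variable {𝕜 E : Type*} [Field 𝕜] [LinearOrder 𝕜] [IsStrictOrderedRing 𝕜] [TopologicalSpace 𝕜]
  [OrderTopology 𝕜] [AddCommGroup E] [Module 𝕜 E] [TopologicalSpace E] [ContinuousAdd E]
  [ContinuousSMul 𝕜 E]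

theorem Convex.closure_inter_setOf_neg {C : Set E} (hC : Convex 𝕜 C) (hCc : IsClosed C)
    {F : Set (E →ᵃ[𝕜] 𝕜)} (hF : ∀ f ∈ F, Continuous f)
    (hne : (C ∩ {x | ∀ f ∈ F, f x < 0}).Nonempty) :
    closure (C ∩ {x | ∀ f ∈ F, f x < 0}) = C ∩ {x | ∀ f ∈ F, f x ≤ 0} := by
  refine Subset.antisymm (closure_minimal (inter_subset_inter_right _ fun x hx f hf =>
    (hx f hf).le) (hCc.inter ?_)) ?_
  · simpa only [ofPred_forall] using isClosed_biInter fun f hf => isClosed_le (hF f hf)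
      continuous_const
  rintro x ⟨hxC, hx⟩
  obtain ⟨z, hzC, hz⟩ := hne
  have hseg : openSegment 𝕜 x z ⊆ C ∩ {x | ∀ f ∈ F, f x < 0} := by
    rintro _ ⟨a, b, ha, hb, hab, rfl⟩
    refine ⟨hC hxC hzC ha.le hb.le hab, fun f hf => ?_⟩
    rw [Convex.combo_affine_apply hab, smul_eq_mul, smul_eq_mul]
    linarith [mul_nonpos_of_nonneg_of_nonpos ha.le (hx f hf), mul_neg_of_pos_of_neg hb (hz f hf)]
  exact closure_mono hseg (segment_subset_closure_openSegment (left_mem_segment 𝕜 x z))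

end Closure

section Polyhedron

variable {n : ℕ}

theorem isPolyhedron_empty : IsPolyhedron (∅ : Set (Fin n → ℝ)) :=
  ⟨∅, finite_empty, by simp, sUnion_empty.symm⟩

theorem IsPolytope.isPolyhedron {P : Set (Fin n → ℝ)} (hP : IsPolytope P) : IsPolyhedron P :=
  ⟨{P}, finite_singleton P, by simpa using hP, (sUnion_singleton P).symm⟩

theorem IsPolyhedron.biUnion {ι : Type*} {I : Set ι} (hI : I.Finite) {P : ι → Set (Fin n → ℝ)}
    (h : ∀ i ∈ I, IsPolyhedron (P i)) : IsPolyhedron (⋃ i ∈ I, P i) := by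
  choose! S hS hpoly heq using h
  refine ⟨⋃ i ∈ I, S i, hI.biUnion hS, fun s hs => ?_, ?_⟩
  · obtain ⟨i, hi, hs⟩ := mem_iUnion₂.1 hs
    exact hpoly i hi s hs
  · simp only [sUnion_iUnion]
    exact iUnion₂_congr heq

theorem IsPolyhedron.isOpenPolyhedral_compl {Q : Set (Fin n → ℝ)} (hQ : IsPolyhedron Q) :
    IsOpenPolyhedral ℝ Qᶜ := by
  obtain ⟨S, hS, hpoly, rfl⟩ := hQ
  rw [sUnion_eq_biUnion, compl_iUnion₂]
  refine .biInter hS fun s hs => ?_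
  obtain ⟨V, rfl⟩ := hpoly s hs
  exact isOpenPolyhedral_compl_convexHull V

theorem IsPolytope.isPolyhedron_closure_inter_setOf_neg {P : Set (Fin n → ℝ)} (hP : IsPolytope P)
    {F : Set ((Fin n → ℝ) →ᵃ[ℝ] ℝ)} (hF : F.Finite) :
    IsPolyhedron (closure (P ∩ {x | ∀ f ∈ F, f x < 0})) := by
  obtain ⟨V, rfl⟩ := hP
  rcases eq_empty_or_nonempty (convexHull ℝ (V : Set (Fin n → ℝ)) ∩ {x | ∀ f ∈ F, f x < 0})
    with hempty | hne
  · simpa [hempty] using isPolyhedron_empty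
  rw [(convex_convexHull ℝ _).closure_inter_setOf_neg (V.finite_toSet.isClosed_convexHull (𝕜 := ℝ))
    (fun f _ => f.continuous_of_finiteDimensional) hne]
  obtain ⟨t, ht, heq⟩ := V.finite_toSet.exists_convexHull_eq_inter_setOf_nonpos hF
  rw [← heq]
  exact IsPolytope.isPolyhedron ⟨ht.toFinset, by simp⟩

theorem IsPolytope.isPolyhedron_closure_inter {P U : Set (Fin n → ℝ)} (hP : IsPolytope P)
    (hU : IsOpenPolyhedral ℝ U) : IsPolyhedron (closure (P ∩ U)) := by
  obtain ⟨𝓕, h𝓕, hF, rfl⟩ := hU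
  rw [inter_iUnion₂, h𝓕.closure_biUnion]
  exact .biUnion h𝓕 fun F hF' => hP.isPolyhedron_closure_inter_setOf_neg (hF F hF')

end Polyhedron

/-- If `Q₁` and `Q₂` are polyhedra in ℝⁿ, then `cl (Q₂ \ Q₁)` is a
polyhedron in ℝⁿ. -/
theorem closure_diff_polyhedron {n : ℕ} {Q₁ Q₂ : Set (Fin n → ℝ)}
    (h₁ : IsPolyhedron Q₁) (h₂ : IsPolyhedron Q₂) :
    IsPolyhedron (closure (Q₂ \ Q₁)) := by
  obtain ⟨S, hS, hpoly, rfl⟩ := h₂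
  rw [sdiff_eq, sUnion_eq_biUnion, iUnion₂_inter, hS.closure_biUnion]
  exact .biUnion hS fun s hs => (hpoly s hs).isPolyhedron_closure_inter h₁.isOpenPolyhedral_compl
end

section
/- Let P ⊆ ℝⁿ be a polyhedron and let U, V be open subpolyhedra of P. Then the Heyting implication of U and V in the lattice of open subsets of P, namely int_P((P \ U) ∪ V), where int_P denotes interior in the subspace topology of P, is again an open subpolyhedron of P. In particular, the open subpolyhedra of P form a Heyting subalgebra of the Heyting algebra of open sets of P. -/
open Set

/-!
The complement in `P` of the implication is the closure of `(P \ V) \ (P \ U)`, a difference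
`B \ A` of polyhedra, so it suffices that `closure (B \ A)` is a polyhedron. By Carathéodory `A`
is a finite union of simplices, and a simplex is cut out by finitely many closed half-spaces (its
barycentric coordinates in an extended affine basis). Hence `B \ A` is a finite union of
polytopes intersected with finitely many open half-spaces. The closure of such a piece, when
nonempty, is the same polytope intersected with the closed half-spaces, and a polytope cut by a
closed half-space `f ≤ 0` is a polytope: the convex hull of its vertices with `f ≤ 0` and of the
points where the segments joining vertices on opposite sides cross `f = 0`.
-/

def IsFiniteUnion {α : Type*} (Q : Set α → Prop) (D : Set α) : Prop :=
  ∃ S : Set (Set α), S.Finite ∧ (∀ s ∈ S, Q s) ∧ D = ⋃₀ S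

namespace IsFiniteUnion

variable {α : Type*} {Q R : Set α → Prop} {D A : Set α}

lemma of_prop {s : Set α} (hs : Q s) : IsFiniteUnion Q s :=
  ⟨{s}, finite_singleton s, by simpa using hs, sUnion_singleton s |>.symm⟩

lemma biUnion {ι : Type*} {I : Set ι} (hI : I.Finite) {D : ι → Set α}
    (hD : ∀ i ∈ I, IsFiniteUnion Q (D i)) : IsFiniteUnion Q (⋃ i ∈ I, D i) := by
  choose! S hSfin hSQ hDS using hD
  refine ⟨⋃ i ∈ I, S i, hI.biUnion hSfin, ?_, ?_⟩
  · simp only [mem_iUnion₂]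
    rintro s ⟨i, hi, hs⟩
    exact hSQ i hi s hs
  · simp only [sUnion_iUnion]
    exact iUnion₂_congr hDS

lemma bind (hD : IsFiniteUnion Q D) (hQR : ∀ s, Q s → IsFiniteUnion R s) :
    IsFiniteUnion R D := by
  obtain ⟨S, hSfin, hSQ, rfl⟩ := hD
  rw [sUnion_eq_biUnion]
  exact biUnion hSfin fun s hs => hQR s (hSQ s hs)

lemma sdiff (hD : IsFiniteUnion Q D) (hA : IsFiniteUnion R A)
    (hQR : ∀ s t, Q s → R t → IsFiniteUnion Q (s \ t)) : IsFiniteUnion Q (D \ A) := by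
  obtain ⟨T, hTfin, hTR, rfl⟩ := hA
  induction T, hTfin using Set.Finite.induction_on with
  | empty => simpa using hD
  | @insert t T _ _ ih =>
    obtain ⟨S, hSfin, hSQ, hS⟩ := ih fun u hu => hTR u (mem_insert_of_mem t hu)
    rw [sUnion_insert, union_comm, ← sdiff_sdiff, hS, sUnion_eq_biUnion]
    simp only [iUnion_sdiff]
    exact biUnion hSfin fun s hs => hQR s t (hSQ s hs) (hTR t (mem_insert t T))

lemma closure [TopologicalSpace α] (hD : IsFiniteUnion Q D)
    (hQR : ∀ s, Q s → R (closure s)) : IsFiniteUnion R (closure D) := by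
  obtain ⟨S, hSfin, hSQ, rfl⟩ := hD
  rw [hSfin.closure_sUnion]
  exact biUnion hSfin fun s hs => of_prop (hQR s (hSQ s hs))

end IsFiniteUnion

section Crossing

variable {E : Type*} [AddCommGroup E] [Module ℝ E] (f : E →ᵃ[ℝ] ℝ)

/-- The point where the line through `y` and `z` meets the hyperplane `f = 0`, if `f y ≠ f z`. -/
noncomputable def zeroCrossing (y z : E) : E := (f z - f y)⁻¹ • (f z • y - f y • z)

lemma zeroCrossing_neg (y z : E) : zeroCrossing (-f) z y = zeroCrossing f y z := by
  simp only [zeroCrossing, AffineMap.coe_neg, Pi.neg_apply]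
  rw [show -f y - -f z = f z - f y by ring]
  module

lemma zeroCrossing_eq_combo (y z : E) :
    zeroCrossing f y z = (f z / (f z - f y)) • y + (-f y / (f z - f y)) • z := by
  simp only [zeroCrossing, div_eq_inv_mul]
  module

lemma apply_zeroCrossing {y z : E} (h : f y ≠ f z) : f (zeroCrossing f y z) = 0 := by
  have hd : f z - f y ≠ 0 := sub_ne_zero.2 h.symm
  rw [zeroCrossing_eq_combo, Convex.combo_affine_apply (by field_simp; ring)]
  simp only [smul_eq_mul]
  field_simp
  ring

lemma zeroCrossing_mem_segment {y z : E} (hy : f y ≤ 0) (hz : 0 < f z) :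
    zeroCrossing f y z ∈ segment ℝ y z := by
  have hd : 0 < f z - f y := by linarith
  refine ⟨_, _, by positivity, div_nonneg (neg_nonneg.2 hy) hd.le, ?_,
    (zeroCrossing_eq_combo f y z).symm⟩
  field_simp
  ring

lemma mem_segment_zeroCrossing {x y z : E} (hx : x ∈ segment ℝ y z) (hfx : f x ≤ 0)
    (hy : f y ≤ 0) (hz : 0 < f z) : x ∈ segment ℝ y (zeroCrossing f y z) := by
  obtain ⟨a, b, ha, hb, hab, rfl⟩ := hx
  rw [Convex.combo_affine_apply hab, smul_eq_mul, smul_eq_mul] at hfx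
  obtain rfl : a = 1 - b := by linarith
  rcases hy.lt_or_eq with hy | hy
  · have hd : 0 < f z - f y := by linarith
    have hy0 : f y ≠ 0 := hy.ne
    refine ⟨1 - b * (f z - f y) / -f y, b * (f z - f y) / -f y, ?_,
      div_nonneg (mul_nonneg hb hd.le) (by linarith), by ring, ?_⟩
    · rw [sub_nonneg, div_le_one (by linarith)]
      linarith
    · rw [zeroCrossing_eq_combo]
      match_scalars <;> field_simp
      ring
  · obtain rfl : b = 0 := by nlinarith
    simpa using left_mem_segment ℝ y (zeroCrossing f y z)

/-- Central projection from `y` onto the hyperplane `f = 0` maps segments into segments. -/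
lemma zeroCrossing_combo_mem_segment {y z₁ z₂ : E} (h₁ : f y < f z₁) (h₂ : f y < f z₂)
    {a b : ℝ} (ha : 0 ≤ a) (hb : 0 ≤ b) (hab : a + b = 1) :
    zeroCrossing f y (a • z₁ + b • z₂) ∈
      segment ℝ (zeroCrossing f y z₁) (zeroCrossing f y z₂) := by
  have hlt : f y < f (a • z₁ + b • z₂) := (convex_Ioi (f y)).affine_preimage f h₁ h₂ ha hb hab
  rw [Convex.combo_affine_apply hab, smul_eq_mul, smul_eq_mul] at hlt
  have hd₁ : f z₁ - f y ≠ 0 := by linarith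
  have hd₂ : f z₂ - f y ≠ 0 := by linarith
  obtain rfl : b = 1 - a := by linarith
  have hd : a * f z₁ + (1 - a) * f z₂ - f y ≠ 0 := by linarith
  refine ⟨a * (f z₁ - f y) / (a * f z₁ + (1 - a) * f z₂ - f y),
    (1 - a) * (f z₂ - f y) / (a * f z₁ + (1 - a) * f z₂ - f y), ?_, ?_, ?_, ?_⟩
  · exact div_nonneg (mul_nonneg ha (by linarith)) (by linarith)
  · exact div_nonneg (mul_nonneg hb (by linarith)) (by linarith)
  · field_simp
    ring
  · simp only [zeroCrossing, Convex.combo_affine_apply hab, smul_eq_mul]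
    match_scalars <;> field_simp

lemma zeroCrossing_mem_convexHull_image {y z : E} {S : Set E} (hS : ∀ w ∈ S, f y < f w)
    (hz : z ∈ convexHull ℝ S) : zeroCrossing f y z ∈ convexHull ℝ (zeroCrossing f y '' S) := by
  suffices h : convexHull ℝ S ⊆
      {w | f y < f w ∧ zeroCrossing f y w ∈ convexHull ℝ (zeroCrossing f y '' S)} from
    (h hz).2
  refine convexHull_min (fun w hw => ⟨hS w hw, subset_convexHull ℝ _ ⟨w, hw, rfl⟩⟩) ?_
  rintro w₁ ⟨hw₁, hc₁⟩ w₂ ⟨hw₂, hc₂⟩ a b ha hb hab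
  exact ⟨(convex_Ioi (f y)).affine_preimage f hw₁ hw₂ ha hb hab,
    (convex_convexHull ℝ _).segment_subset hc₁ hc₂
      (zeroCrossing_combo_mem_segment f hw₁ hw₂ ha hb hab)⟩

lemma zeroCrossing_mem_convexHull_image2 {L R : Set E} (hL : ∀ v ∈ L, f v ≤ 0)
    (hR : ∀ w ∈ R, 0 < f w) {y z : E} (hy : y ∈ convexHull ℝ L) (hz : z ∈ convexHull ℝ R) :
    zeroCrossing f y z ∈ convexHull ℝ (image2 (zeroCrossing f) L R) := by
  have hvz : ∀ v ∈ L, zeroCrossing f v z ∈ convexHull ℝ (image2 (zeroCrossing f) L R) :=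
    fun v hv => convexHull_mono (image_subset_image2_right hv)
      (zeroCrossing_mem_convexHull_image f (fun w hw => (hL v hv).trans_lt (hR w hw)) hz)
  have hfz : 0 < f z := convexHull_min hR ((convex_Ioi 0).affine_preimage f) hz
  rw [← zeroCrossing_neg]
  refine convexHull_min ?_ (convex_convexHull ℝ _)
    (zeroCrossing_mem_convexHull_image (-f) (fun v hv => ?_) hy)
  · rintro _ ⟨v, hv, rfl⟩
    rw [zeroCrossing_neg]
    exact hvz v hv
  · simp only [AffineMap.coe_neg, Pi.neg_apply, neg_lt_neg_iff]
    exact (hL v hv).trans_lt hfz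

end Crossing

section Polytope

variable {E : Type*} [AddCommGroup E] [Module ℝ E]

theorem exists_convexHull_eq_inter_halfspace (V : Finset E) (f : E →ᵃ[ℝ] ℝ) :
    ∃ W : Finset E, convexHull ℝ (W : Set E) = convexHull ℝ ↑V ∩ {x | f x ≤ 0} := by
  classical
  set L := V.filter (fun v => f v ≤ 0)
  set R := V.filter (fun v => ¬f v ≤ 0)
  have hL : ∀ v ∈ (L : Set E), f v ≤ 0 := fun v hv => (Finset.mem_filter.1 hv).2
  have hR : ∀ w ∈ (R : Set E), 0 < f w := fun w hw => not_le.1 (Finset.mem_filter.1 hw).2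
  have hV : (V : Set E) = ↑L ∪ ↑R := by
    rw [← Finset.coe_union, Finset.filter_union_filter_not_eq]
  have hLV : (L : Set E) ⊆ V := Finset.coe_subset.2 (Finset.filter_subset _ _)
  have hRV : (R : Set E) ⊆ V := Finset.coe_subset.2 (Finset.filter_subset _ _)
  refine ⟨L ∪ Finset.image₂ (zeroCrossing f) L R, ?_⟩
  rw [Finset.coe_union, Finset.coe_image₂]
  apply Subset.antisymm
  · refine convexHull_min ?_ ((convex_convexHull ℝ _).inter ((convex_Iic 0).affine_preimage f))
    rintro _ (hv | ⟨v, hv, w, hw, rfl⟩)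
    · exact ⟨subset_convexHull ℝ _ (hLV hv), hL _ hv⟩
    · refine ⟨(convex_convexHull ℝ _).segment_subset (subset_convexHull ℝ _ (hLV hv))
        (subset_convexHull ℝ _ (hRV hw)) (zeroCrossing_mem_segment f (hL v hv) (hR w hw)), ?_⟩
      exact (apply_zeroCrossing f ((hL v hv).trans_lt (hR w hw)).ne).le
  rintro x ⟨hx, hfx⟩
  rw [hV] at hx
  rcases (L : Set E).eq_empty_or_nonempty with hL₀ | hLne
  · rw [hL₀, empty_union] at hx
    have hfx' : 0 < f x := convexHull_min hR ((convex_Ioi 0).affine_preimage f) hx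
    exact (not_le.2 hfx' hfx).elim
  rcases (R : Set E).eq_empty_or_nonempty with hR₀ | hRne
  · rw [hR₀, union_empty] at hx
    exact convexHull_mono subset_union_left hx
  rw [convexHull_union hLne hRne, mem_convexJoin] at hx
  obtain ⟨y, hy, z, hz, hxyz⟩ := hx
  have hfy : f y ≤ 0 := convexHull_min hL ((convex_Iic 0).affine_preimage f) hy
  have hfz : 0 < f z := convexHull_min hR ((convex_Ioi 0).affine_preimage f) hz
  exact (convex_convexHull ℝ _).segment_subset (convexHull_mono subset_union_left hy)
    (convexHull_mono subset_union_right (zeroCrossing_mem_convexHull_image2 f hL hR hy hz))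
    (mem_segment_zeroCrossing f hxyz hfx hfy hfz)

theorem exists_convexHull_eq_inter_halfspaces (V : Finset E) (F : Finset (E →ᵃ[ℝ] ℝ)) :
    ∃ W : Finset E, convexHull ℝ (W : Set E) = convexHull ℝ ↑V ∩ {x | ∀ f ∈ F, f x ≤ 0} := by
  classical
  induction F using Finset.induction_on generalizing V with
  | empty => exact ⟨V, by simp⟩
  | insert g F _ ih =>
    obtain ⟨W, hW⟩ := exists_convexHull_eq_inter_halfspace V g
    obtain ⟨W', hW'⟩ := ih W
    refine ⟨W', ?_⟩
    rw [hW', hW]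
    ext x
    simp only [mem_inter_iff, mem_ofPred_eq, Finset.forall_mem_insert]
    tauto

def IsHPolyhedron (s : Set E) : Prop :=
  ∃ G : Finset (E →ᵃ[ℝ] ℝ), s = {x | ∀ g ∈ G, g x ≤ 0}

theorem AffineBasis.convexHull_image_eq {ι : Type*} [Fintype ι] (b : AffineBasis ι ℝ E)
    (S : Set ι) :
    convexHull ℝ (b '' S) = {x | (∀ i, 0 ≤ b.coord i x) ∧ ∀ i ∉ S, b.coord i x ≤ 0} := by
  classical
  apply Subset.antisymm
  · refine convexHull_min ?_ ?_
    · rintro _ ⟨j, hj, rfl⟩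
      refine ⟨fun i => ?_, fun i hi => ?_⟩ <;> rw [AffineBasis.coord_apply]
      · split_ifs <;> norm_num
      · rw [if_neg (ne_of_mem_of_not_mem hj hi).symm]
    · rintro x ⟨hx₀, hx⟩ y ⟨hy₀, hy⟩ a c ha hc hac
      have hcoord (i : ι) := Convex.combo_affine_apply (f := b.coord i) (x := x) (y := y) hac
      refine ⟨fun i => ?_, fun i hi => ?_⟩ <;> rw [hcoord i, smul_eq_mul, smul_eq_mul]
      · exact add_nonneg (mul_nonneg ha (hx₀ i)) (mul_nonneg hc (hy₀ i))
      · exact add_nonpos (mul_nonpos_of_nonneg_of_nonpos ha (hx i hi))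
          (mul_nonpos_of_nonneg_of_nonpos hc (hy i hi))
  · rintro x ⟨hx₀, hx⟩
    have hvanish : ∀ i ∈ Finset.univ, b.coord i x ≠ 0 → i ∈ S := fun i _ h =>
      by_contra fun hi => h (le_antisymm (hx i hi) (hx₀ i))
    have hsum := b.sum_coord_apply_eq_one x
    have hcomb := b.linear_combination_coord_eq_self x
    rw [← Finset.sum_filter_of_ne hvanish] at hsum
    rw [← Finset.sum_filter_of_ne fun i hi h => hvanish i hi fun h' => h (by rw [h', zero_smul])]
      at hcomb
    rw [← hcomb]
    exact (convex_convexHull ℝ _).sum_mem (fun i _ => hx₀ i) hsum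
      fun i hi => subset_convexHull ℝ _ ⟨i, (Finset.mem_filter.1 hi).2, rfl⟩

theorem AffineIndependent.isHPolyhedron_convexHull [FiniteDimensional ℝ E] {t : Finset E}
    (ht : AffineIndependent ℝ ((↑) : t → E)) : IsHPolyhedron (convexHull ℝ (t : Set E)) := by
  classical
  obtain ⟨s, hts, hs, hspan⟩ := exists_subset_affineIndependent_affineSpan_eq_top ht
  have : Fintype s := (finite_set_of_fin_dim_affineIndependent ℝ hs).fintype
  let b : AffineBasis s ℝ E := ⟨(↑), hs, by rwa [Subtype.range_coe]⟩
  have hbt : b '' {i | (i : E) ∈ t} = t := by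
    ext x
    refine ⟨fun ⟨i, hi, hx⟩ => hx ▸ hi, fun hx => ⟨⟨x, hts hx⟩, hx, rfl⟩⟩
  refine ⟨Finset.univ.image (fun i => -b.coord i) ∪
    (Finset.univ.filter fun i : s => (i : E) ∉ t).image b.coord, ?_⟩
  rw [← hbt, b.convexHull_image_eq]
  ext x
  simp only [mem_ofPred_eq, Finset.forall_mem_union, Finset.forall_mem_image, Finset.mem_univ,
    Finset.mem_filter, true_and, forall_const, AffineMap.coe_neg, Pi.neg_apply, neg_nonpos]

theorem isFiniteUnion_isHPolyhedron_convexHull [FiniteDimensional ℝ E] (V : Finset E) :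
    IsFiniteUnion IsHPolyhedron (convexHull ℝ (V : Set E)) := by
  rw [convexHull_eq_union]
  have hI : {t : Finset E | ↑t ⊆ (V : Set E) ∧ AffineIndependent ℝ ((↑) : t → E)}.Finite :=
    V.powerset.finite_toSet.subset fun t ht => by simpa using ht.1
  convert IsFiniteUnion.biUnion hI fun t ht => IsFiniteUnion.of_prop ht.2.isHPolyhedron_convexHull
    using 1
  ext x
  simp only [mem_iUnion, exists_prop, mem_ofPred_eq, Finset.coe_subset]
  exact exists_congr fun t => by tauto

def IsCutPolytope (s : Set E) : Prop :=
  ∃ (V : Finset E) (F : Finset (E →ᵃ[ℝ] ℝ)), s = convexHull ℝ ↑V ∩ {x | ∀ f ∈ F, f x < 0}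

lemma IsCutPolytope.sdiff {s t : Set E} (hs : IsCutPolytope s) (ht : IsHPolyhedron t) :
    IsFiniteUnion IsCutPolytope (s \ t) := by
  classical
  obtain ⟨V, F, rfl⟩ := hs
  obtain ⟨G, rfl⟩ := ht
  have hdiff : (convexHull ℝ ↑V ∩ {x | ∀ f ∈ F, f x < 0}) \ {x | ∀ g ∈ G, g x ≤ 0} =
      ⋃ g ∈ (G : Set (E →ᵃ[ℝ] ℝ)), convexHull ℝ ↑V ∩ {x | ∀ f ∈ insert (-g) F, f x < 0} := by
    ext x
    simp only [mem_sdiff, mem_inter_iff, mem_ofPred_eq, mem_iUnion, Finset.mem_coe,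
      Finset.forall_mem_insert, AffineMap.coe_neg, Pi.neg_apply, neg_neg_iff_pos, not_forall,
      not_le, exists_prop]
    tauto
  rw [hdiff]
  exact IsFiniteUnion.biUnion G.finite_toSet fun g _ => IsFiniteUnion.of_prop ⟨V, _, rfl⟩

end Polytope

section Closure

variable {E : Type*} [NormedAddCommGroup E] [NormedSpace ℝ E] [FiniteDimensional ℝ E]

theorem Convex.closure_inter_open_halfspaces {C : Set E} (hC : Convex ℝ C) (hCc : IsClosed C)
    {F : Set (E →ᵃ[ℝ] ℝ)} (hne : (C ∩ {x | ∀ f ∈ F, f x < 0}).Nonempty) :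
    closure (C ∩ {x | ∀ f ∈ F, f x < 0}) = C ∩ {x | ∀ f ∈ F, f x ≤ 0} := by
  apply Subset.antisymm
  · refine closure_minimal (inter_subset_inter_right C fun x hx f hf => (hx f hf).le) ?_
    simp only [ofPred_forall]
    exact hCc.inter (isClosed_biInter fun f _ =>
      isClosed_le f.continuous_of_finiteDimensional continuous_const)
  · obtain ⟨y, hyC, hy⟩ := hne
    rintro x ⟨hxC, hx⟩
    refine closure_mono ?_ (segment_subset_closure_openSegment (left_mem_segment ℝ x y))
    rintro _ ⟨a, b, ha, hb, hab, rfl⟩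
    refine ⟨hC hxC hyC ha.le hb.le hab, fun f hf => ?_⟩
    rw [Convex.combo_affine_apply hab, smul_eq_mul, smul_eq_mul]
    nlinarith [hx f hf, hy f hf]

lemma IsCutPolytope.exists_closure_eq_convexHull {s : Set E} (hs : IsCutPolytope s) :
    ∃ W : Finset E, closure s = convexHull ℝ ↑W := by
  obtain ⟨V, F, rfl⟩ := hs
  rcases (convexHull ℝ ↑V ∩ {x | ∀ f ∈ F, f x < 0}).eq_empty_or_nonempty with h | h
  · exact ⟨∅, by rw [h, closure_empty, Finset.coe_empty, convexHull_empty]⟩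
  obtain ⟨W, hW⟩ := exists_convexHull_eq_inter_halfspaces V F
  refine ⟨W, ?_⟩
  rw [hW]
  exact (convex_convexHull ℝ _).closure_inter_open_halfspaces
    (V.finite_toSet.isCompact_convexHull (𝕜 := ℝ).isClosed) (F := ↑F) h

end Closure

section Polyhedron

variable {n : ℕ}

lemma isPolyhedron_iff_isFiniteUnion {P : Set (Fin n → ℝ)} :
    IsPolyhedron P ↔ IsFiniteUnion IsPolytope P := Iff.rfl

lemma IsPolyhedron.closure_sdiff {A B : Set (Fin n → ℝ)} (hA : IsPolyhedron A)
    (hB : IsPolyhedron B) : IsPolyhedron (closure (B \ A)) := by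
  have hB' : IsFiniteUnion IsCutPolytope B := (isPolyhedron_iff_isFiniteUnion.1 hB).bind
    fun s ⟨V, hV⟩ => IsFiniteUnion.of_prop ⟨V, ∅, by simp [hV]⟩
  have hA' : IsFiniteUnion IsHPolyhedron A := (isPolyhedron_iff_isFiniteUnion.1 hA).bind
    fun s ⟨V, hV⟩ => hV ▸ isFiniteUnion_isHPolyhedron_convexHull V
  exact isPolyhedron_iff_isFiniteUnion.2 <| (hB'.sdiff hA' fun s t hs ht => hs.sdiff ht).closure
    fun s hs => hs.exists_closure_eq_convexHull

lemma IsPolyhedron.isClosed {P : Set (Fin n → ℝ)} (hP : IsPolyhedron P) : IsClosed P := by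
  obtain ⟨S, hS, hpoly, rfl⟩ := hP
  refine (hS.isCompact_sUnion fun s hs => ?_).isClosed
  obtain ⟨V, rfl⟩ := hpoly s hs
  exact V.finite_toSet.isCompact_convexHull (𝕜 := ℝ)

lemma sdiff_intSub (P S : Set (Fin n → ℝ)) : P \ intSub P S = P ∩ closure (P \ S) := by
  rw [intSub, ← image_val_compl, ← closure_compl, ← preimage_compl,
    Topology.IsInducing.subtypeVal.closure_eq_preimage_closure_image, Subtype.image_preimage_coe,
    Subtype.image_preimage_coe, Set.sdiff_eq]

end Polyhedron

/-- If `U`, `V` are open subpolyhedra of a polyhedron `P ⊆ ℝⁿ`, then the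
Heyting implication `int_P ((P \ U) ∪ V)` (interior in the subspace topology of `P`) is again
an open subpolyhedron of `P`; hence the open subpolyhedra of `P` form a Heyting subalgebra of
the opens of `P`. -/
theorem himp_open_subpoly {n : ℕ} (P U V : Set (Fin n → ℝ)) (hP : IsPolyhedron P)
    (hU : IsOpenSubpoly P U) (hV : IsOpenSubpoly P V) :
    IsOpenSubpoly P (intSub P ((P \ U) ∪ V)) := by
  have hdiff : P \ ((P \ U) ∪ V) = (P \ V) \ (P \ U) := by
    ext x
    simp only [mem_sdiff, mem_union]
    tauto
  have hsub : closure ((P \ V) \ (P \ U)) ⊆ P :=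
    closure_minimal (sdiff_subset.trans sdiff_subset) hP.isClosed
  refine ⟨image_subset_iff.2 fun x _ => x.2, ?_⟩
  rw [sdiff_intSub, hdiff, inter_eq_right.2 hsub]
  exact hU.2.closure_sdiff hV.2
end

section
/- Let P ⊆ ℝⁿ be a polyhedron and let O₁,…,O_m be open subpolyhedra of P. Then the smallest collection of subsets of P containing ∅, P, O₁,…,O_m and closed under binary union, binary intersection, and the operation (U,V) ↦ int_P((P \ U) ∪ V) (interior in the subspace P) is finite. Consequently, the Heyting algebra of open subpolyhedra of P is locally finite. -/
open Set

namespace LocFin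

open Finset

variable {n : ℕ}

/-- Evaluation of an affine functional given by (coefficients, constant). -/
def aeval (p : (Fin n → ℝ) × ℝ) (x : Fin n → ℝ) : ℝ := (∑ j, p.1 j * x j) + p.2

/-- Evaluation of an affine row on auxiliary variables `t` and main variables `x`. -/
def rowEval {m : ℕ} (p : (Fin m → ℝ) × (Fin n → ℝ) × ℝ) (t : Fin m → ℝ) (x : Fin n → ℝ) : ℝ :=
  (∑ j, p.1 j * t j) + aeval p.2 x

/-- The projection to `x`-space of the solution set of a finite system of affine
inequalities in `(t, x)`. -/
def ElimSet {m : ℕ} (F : Finset ((Fin m → ℝ) × (Fin n → ℝ) × ℝ)) : Set (Fin n → ℝ) :=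
  {x | ∃ t : Fin m → ℝ, ∀ p ∈ F, rowEval p t x ≤ 0}

/-- Fourier–Motzkin core: solvability of a finite system of linear inequalities in one
real variable. -/
lemma fm_core {ι : Type*} (F : Finset ι) (α r : ι → ℝ) :
    (∃ y : ℝ, ∀ i ∈ F, α i * y + r i ≤ 0) ↔
      ((∀ i ∈ F, α i = 0 → r i ≤ 0) ∧
        ∀ i ∈ F, ∀ j ∈ F, 0 < α i → α j < 0 → α i * r j - α j * r i ≤ 0) := by
  classical
  constructor
  · rintro ⟨y, hy⟩
    refine ⟨fun i hi h0 => by have := hy i hi; rw [h0] at this; linarith, fun i hi j hj hpi hnj => ?_⟩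
    have h1 := hy i hi
    have h2 := hy j hj
    nlinarith
  · rintro ⟨h0, hpair⟩
    by_cases hLo : (F.filter (fun j => α j < 0)).Nonempty
    · obtain ⟨j0, hj0, hj0max⟩ := Finset.exists_max_image _ (fun j => r j / (-α j)) hLo
      rw [mem_filter] at hj0
      refine ⟨r j0 / (-α j0), fun i hiF => ?_⟩
      rcases lt_trichotomy (α i) 0 with hneg | hz | hpos
      · have hle : r i / (-α i) ≤ r j0 / (-α j0) := hj0max i (mem_filter.mpr ⟨hiF, hneg⟩)
        rw [div_le_div_iff₀ (by linarith) (by linarith)] at hle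
        have hne : α j0 ≠ 0 := ne_of_lt hj0.2
        have hq : α i * (r j0 / (-α j0)) * (-α j0) = α i * r j0 := by
          field_simp
        nlinarith [hj0.2]
      · simpa [hz] using h0 i hiF hz
      · have hp := hpair i hiF j0 hj0.1 hpos hj0.2
        have hne : α j0 ≠ 0 := ne_of_lt hj0.2
        have hq : α i * (r j0 / (-α j0)) * (-α j0) = α i * r j0 := by
          field_simp
        nlinarith [hj0.2]
    · by_cases hHi : (F.filter (fun i => 0 < α i)).Nonempty
      · obtain ⟨i0, hi0, hi0min⟩ := Finset.exists_min_image _ (fun i => -r i / α i) hHi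
        rw [mem_filter] at hi0
        refine ⟨-r i0 / α i0, fun i hiF => ?_⟩
        rcases lt_trichotomy (α i) 0 with hneg | hz | hpos
        · exact absurd ⟨i, mem_filter.mpr ⟨hiF, hneg⟩⟩ hLo
        · simpa [hz] using h0 i hiF hz
        · have hle : -r i0 / α i0 ≤ -r i / α i := hi0min i (mem_filter.mpr ⟨hiF, hpos⟩)
          have hane : α i ≠ 0 := ne_of_gt hpos
          have h2 : α i * (-r i / α i) = -r i := by field_simp
          have h3 : α i * (-r i0 / α i0) ≤ α i * (-r i / α i) :=
            mul_le_mul_of_nonneg_left hle (le_of_lt hpos)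
          linarith
      · refine ⟨0, fun i hiF => ?_⟩
        have h1 : ¬ α i < 0 := fun h => hLo ⟨i, mem_filter.mpr ⟨hiF, h⟩⟩
        have h2 : ¬ 0 < α i := fun h => hHi ⟨i, mem_filter.mpr ⟨hiF, h⟩⟩
        have : α i = 0 := le_antisymm (not_lt.mp h2) (not_lt.mp h1)
        simpa [this] using h0 i hiF this


/-- One step of Fourier–Motzkin elimination. -/
lemma elim_step (F : Finset ((Fin (m + 1) → ℝ) × (Fin n → ℝ) × ℝ)) :
    ∃ F' : Finset ((Fin m → ℝ) × (Fin n → ℝ) × ℝ), ElimSet F = ElimSet F' := by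
  classical
  set L := Fin.last m with hL
  set drop : ((Fin (m + 1) → ℝ) × (Fin n → ℝ) × ℝ) → ((Fin m → ℝ) × (Fin n → ℝ) × ℝ) :=
    fun p => (fun c => p.1 c.castSucc, p.2) with hdrop
  set comb : (((Fin (m + 1) → ℝ) × (Fin n → ℝ) × ℝ) × ((Fin (m + 1) → ℝ) × (Fin n → ℝ) × ℝ)) →
      ((Fin m → ℝ) × (Fin n → ℝ) × ℝ) :=
    fun q => (fun c => q.1.1 L * q.2.1 c.castSucc - q.2.1 L * q.1.1 c.castSucc,
      fun j => q.1.1 L * q.2.2.1 j - q.2.1 L * q.1.2.1 j,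
      q.1.1 L * q.2.2.2 - q.2.1 L * q.1.2.2) with hcomb
  refine ⟨(F.filter fun p => p.1 L = 0).image drop ∪
    ((F ×ˢ F).filter fun q => 0 < q.1.1 L ∧ q.2.1 L < 0).image comb, ?_⟩
  have hsum : ∀ (k : ℕ) (u v w : Fin k → ℝ) (a b : ℝ),
      ∑ c, (a * u c - b * v c) * w c = a * ∑ c, u c * w c - b * ∑ c, v c * w c := by
    intro k u v w a b
    rw [Finset.mul_sum, Finset.mul_sum, ← Finset.sum_sub_distrib]
    exact Finset.sum_congr rfl fun c _ => by ring
  ext x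
  simp only [ElimSet, Set.mem_setOf_eq]
  constructor
  · rintro ⟨t, ht⟩
    refine ⟨fun c => t c.castSucc, ?_⟩
    have hdec : ∀ p ∈ F, p.1 L * t L + rowEval (drop p) (fun c => t c.castSucc) x ≤ 0 := by
      intro p hp
      have := ht p hp
      rw [rowEval, Fin.sum_univ_castSucc, ← hL] at this
      simp only [rowEval, hdrop]
      linarith
    have := (fm_core F (fun p => p.1 L) (fun p => rowEval (drop p) (fun c => t c.castSucc) x)).mp
      ⟨t L, fun p hp => by have := hdec p hp; linarith⟩
    obtain ⟨h1, h2⟩ := this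
    intro p' hp'
    rcases Finset.mem_union.mp hp' with h | h
    · obtain ⟨p, hp, rfl⟩ := Finset.mem_image.mp h
      rw [Finset.mem_filter] at hp
      exact h1 p hp.1 hp.2
    · obtain ⟨q, hq, rfl⟩ := Finset.mem_image.mp h
      rw [Finset.mem_filter, Finset.mem_product] at hq
      have := h2 q.1 hq.1.1 q.2 hq.1.2 hq.2.1 hq.2.2
      calc rowEval (comb q) (fun c => t c.castSucc) x
          = q.1.1 L * rowEval (drop q.2) (fun c => t c.castSucc) x
            - q.2.1 L * rowEval (drop q.1) (fun c => t c.castSucc) x := by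
            simp only [rowEval, aeval, hcomb, hdrop, hsum]; ring
        _ ≤ 0 := this
  · rintro ⟨t', ht'⟩
    have h1 : ∀ p ∈ F, p.1 L = 0 → rowEval (drop p) t' x ≤ 0 := by
      intro p hp h0
      exact ht' _ (Finset.mem_union_left _ (Finset.mem_image_of_mem _
        (Finset.mem_filter.mpr ⟨hp, h0⟩)))
    have h2 : ∀ p ∈ F, ∀ q ∈ F, 0 < p.1 L → q.1 L < 0 →
        p.1 L * rowEval (drop q) t' x - q.1 L * rowEval (drop p) t' x ≤ 0 := by
      intro p hp q hq hpos hneg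
      have hmem : comb (p, q) ∈ ((F ×ˢ F).filter fun q => 0 < q.1.1 L ∧ q.2.1 L < 0).image comb := by
        apply Finset.mem_image_of_mem
        rw [Finset.mem_filter, Finset.mem_product]
        exact ⟨⟨hp, hq⟩, hpos, hneg⟩
      have := ht' _ (Finset.mem_union_right _ hmem)
      calc p.1 L * rowEval (drop q) t' x - q.1 L * rowEval (drop p) t' x
          = rowEval (comb (p, q)) t' x := by
            simp only [rowEval, aeval, hcomb, hdrop, hsum]; ring
        _ ≤ 0 := this
    obtain ⟨y, hy⟩ := (fm_core F (fun p => p.1 L) (fun p => rowEval (drop p) t' x)).mpr ⟨h1, h2⟩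
    refine ⟨Fin.snoc t' y, fun p hp => ?_⟩
    have := hy p hp
    rw [rowEval, Fin.sum_univ_castSucc]
    simp only [Fin.snoc_castSucc, Fin.snoc_last]
    have hre : rowEval (drop p) t' x = (∑ c, p.1 c.castSucc * t' c) + aeval p.2 x := rfl
    linarith


lemma elim_all : ∀ (m : ℕ) (F : Finset ((Fin m → ℝ) × (Fin n → ℝ) × ℝ)),
    ∃ G : Finset ((Fin n → ℝ) × ℝ), ElimSet F = {x | ∀ p ∈ G, aeval p x ≤ 0}
  | 0, F => by
    classical
    refine ⟨F.image Prod.snd, ?_⟩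
    ext x
    simp only [ElimSet, Set.mem_setOf_eq]
    constructor
    · rintro ⟨t, ht⟩ q hq
      obtain ⟨p, hp, rfl⟩ := Finset.mem_image.mp hq
      have := ht p hp
      simpa [rowEval] using this
    · intro h
      exact ⟨fun i => i.elim0, fun p hp => by
        simpa [rowEval] using h p.2 (Finset.mem_image_of_mem _ hp)⟩
  | m + 1, F => by
    obtain ⟨F', hF'⟩ := elim_step F
    obtain ⟨G, hG⟩ := elim_all m F'
    exact ⟨G, hF'.trans hG⟩

/-- Weyl's theorem: a polytope is a finite intersection of affine half-spaces. -/
lemma isPolytope_rep {s : Set (Fin n → ℝ)} (hs : IsPolytope s) :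
    ∃ G : Finset ((Fin n → ℝ) × ℝ), s = {x | ∀ p ∈ G, aeval p x ≤ 0} := by
  classical
  obtain ⟨V, rfl⟩ := hs
  set k := V.card with hk
  set ε := V.equivFin with hε
  set v : Fin k → (Fin n → ℝ) := fun j => ((ε.symm j : V) : Fin n → ℝ) with hv
  have hvV : ∀ j, v j ∈ V := fun j => (ε.symm j).2
  have sumconv : ∀ {M : Type} [AddCommMonoid M] (g : (Fin n → ℝ) → M),
      ∑ j, g (v j) = ∑ y ∈ V, g y := by
    intro M _ g
    rw [← Finset.sum_coe_sort V g]
    exact Equiv.sum_comp ε.symm (fun y => g ↑y)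
  have ee : ∀ (c : Fin n) (u : Fin k → ℝ) (a : ℝ),
      ∑ j, a * v j c * u j = a * ∑ j, u j * v j c := by
    intro c u a
    rw [Finset.mul_sum]
    exact Finset.sum_congr rfl fun j _ => by ring
  have hsum2 : ∀ (c : Fin n) (a : ℝ) (u : Fin n → ℝ),
      ∑ j, (if j = c then a else 0) * u j = a * u c := by
    intro c a u
    rw [Finset.sum_eq_single c]
    · simp
    · intro b _ hb; simp [hb]
    · intro hc; exact absurd (Finset.mem_univ c) hc
  set rowNeg : Fin k → (Fin k → ℝ) × (Fin n → ℝ) × ℝ :=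
    fun j => ((fun c => if c = j then (-1 : ℝ) else 0), (fun _ => 0), (0 : ℝ)) with hrowNeg
  set rowS1 : (Fin k → ℝ) × (Fin n → ℝ) × ℝ := ((fun _ => (1 : ℝ)), (fun _ => 0), (-1 : ℝ))
    with hrowS1
  set rowS2 : (Fin k → ℝ) × (Fin n → ℝ) × ℝ := ((fun _ => (-1 : ℝ)), (fun _ => 0), (1 : ℝ))
    with hrowS2
  set rowEq : Fin n × Bool → (Fin k → ℝ) × (Fin n → ℝ) × ℝ :=
    fun cb => ((fun j => (if cb.2 then (1 : ℝ) else -1) * v j cb.1),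
      (fun j => if j = cb.1 then (if cb.2 then (-1 : ℝ) else 1) else 0), (0 : ℝ)) with hrowEq
  set F : Finset ((Fin k → ℝ) × (Fin n → ℝ) × ℝ) :=
    (Finset.univ.image rowNeg) ∪ {rowS1, rowS2} ∪ (Finset.univ.image rowEq) with hF
  have key : convexHull ℝ (V : Set (Fin n → ℝ)) = ElimSet F := by
    ext x
    rw [Finset.mem_convexHull']
    simp only [ElimSet, Set.mem_setOf_eq]
    constructor
    · rintro ⟨w, hw0, hw1, hwx⟩
      refine ⟨fun j => w (v j), ?_⟩
      intro p hp
      simp only [hF, Finset.mem_union, Finset.mem_image, Finset.mem_univ, true_and,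
        Finset.mem_insert, Finset.mem_singleton] at hp
      have hxc : ∀ c, ∑ j, w (v j) * v j c = x c := by
        intro c
        have := congrFun hwx c
        rw [Finset.sum_apply] at this
        simp only [Pi.smul_apply, smul_eq_mul] at this
        rw [sumconv (fun y => w y * y c)]
        exact this
      rcases hp with (⟨j, rfl⟩ | hp | hp) | ⟨cb, rfl⟩
      · -- rowNeg j : -w (v j) ≤ 0
        simp only [rowEval, aeval, hrowNeg, ite_mul, neg_mul, zero_mul, one_mul,
          Finset.sum_ite_eq', Finset.mem_univ, if_true, Finset.sum_const_zero, add_zero]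
        have := hw0 (v j) (hvV j)
        linarith
      · subst hp
        simp only [rowEval, aeval, hrowS1, one_mul, zero_mul, Finset.sum_const_zero, add_zero]
        rw [sumconv (fun y => w y), hw1]
        norm_num
      · subst hp
        simp only [rowEval, aeval, hrowS2, neg_mul, one_mul, zero_mul, Finset.sum_const_zero,
          add_zero, Finset.sum_neg_distrib]
        rw [sumconv (fun y => w y), hw1]
        norm_num
      · -- rowEq cb
        obtain ⟨c, b⟩ := cb
        simp only [rowEval, aeval, hrowEq]
        rw [ee c (fun j => w (v j)) _, hxc c, hsum2 c _ x, add_zero]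
        cases b <;> simp
    · rintro ⟨t, ht⟩
      have hmemNeg : ∀ j : Fin k, rowNeg j ∈ F := by
        intro j
        apply Finset.mem_union_left
        exact Finset.mem_union_left _ (Finset.mem_image_of_mem _ (Finset.mem_univ j))
      have hmemS1 : rowS1 ∈ F := by
        apply Finset.mem_union_left
        exact Finset.mem_union_right _ (Finset.mem_insert_self _ _)
      have hmemS2 : rowS2 ∈ F := by
        apply Finset.mem_union_left
        apply Finset.mem_union_right
        exact Finset.mem_insert_of_mem (Finset.mem_singleton_self _)
      have hmemEq : ∀ cb : Fin n × Bool, rowEq cb ∈ F :=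
        fun cb => Finset.mem_union_right _ (Finset.mem_image_of_mem _ (Finset.mem_univ cb))
      have ht0 : ∀ j, 0 ≤ t j := by
        intro j
        have := ht _ (hmemNeg j)
        simp only [rowEval, aeval, hrowNeg, ite_mul, neg_mul, zero_mul, one_mul,
          Finset.sum_ite_eq', Finset.mem_univ, if_true, Finset.sum_const_zero, add_zero] at this
        linarith
      have ht1 : ∑ j, t j = 1 := by
        have h1 := ht _ hmemS1
        have h2 := ht _ hmemS2
        simp only [rowEval, aeval, hrowS1, hrowS2, one_mul, neg_mul, zero_mul,
          Finset.sum_const_zero, add_zero, Finset.sum_neg_distrib] at h1 h2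
        linarith
      have htx : ∀ c, ∑ j, t j * v j c = x c := by
        intro c
        have h1 := ht _ (hmemEq (c, true))
        have h2 := ht _ (hmemEq (c, false))
        simp only [rowEval, aeval, hrowEq] at h1 h2
        rw [ee c t _, hsum2 c _ x, add_zero] at h1
        rw [ee c t _, hsum2 c _ x, add_zero] at h2
        simp only [if_true, Bool.false_eq_true, if_false] at h1 h2
        linarith
      set w : (Fin n → ℝ) → ℝ := fun y => if h : y ∈ V then t (ε ⟨y, h⟩) else 0 with hw
      have hwv : ∀ j, w (v j) = t j := by
        intro j
        rw [hw]
        simp only [hvV j, dif_pos]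
        congr 1
        rw [show (⟨v j, hvV j⟩ : V) = ε.symm j from Subtype.ext rfl]
        exact ε.apply_symm_apply j
      refine ⟨w, ?_, ?_, ?_⟩
      · intro y hy
        rw [hw]
        simp only [hy, dif_pos]
        apply ht0
      · rw [← sumconv (fun y => w y)]
        simp only [hwv]
        exact ht1
      · funext c
        rw [Finset.sum_apply]
        simp only [Pi.smul_apply, smul_eq_mul]
        rw [← sumconv (fun y => w y * y c)]
        simp only [hwv]
        exact htx c
  obtain ⟨G, hG⟩ := elim_all k F
  exact ⟨G, key.trans hG⟩


lemma aeval_combo (p : (Fin n → ℝ) × ℝ) (x y z : Fin n → ℝ) (t : ℝ) :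
    aeval p (fun j => y j + t * (z j - x j)) = aeval p y + t * (aeval p z - aeval p x) := by
  simp only [aeval]
  have : ∀ j ∈ Finset.univ, p.1 j * (y j + t * (z j - x j)) =
      p.1 j * y j + (t * (p.1 j * z j) - t * (p.1 j * x j)) := fun j _ => by ring
  rw [Finset.sum_congr rfl this, Finset.sum_add_distrib, Finset.sum_sub_distrib,
    ← Finset.mul_sum, ← Finset.mul_sum]
  ring

lemma aeval_continuous (p : (Fin n → ℝ) × ℝ) : Continuous (aeval p) := by
  apply Continuous.add _ continuous_const
  exact continuous_finset_sum _ fun j _ => continuous_const.mul (continuous_apply j)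

/-- A set is `𝔽`-cellular if membership only depends on the signs of the functionals in `𝔽`. -/
def Cellular (𝔽 : Finset ((Fin n → ℝ) × ℝ)) (X : Set (Fin n → ℝ)) : Prop :=
  ∀ x y, (∀ p ∈ 𝔽, SignType.sign (aeval p x) = SignType.sign (aeval p y)) → (x ∈ X ↔ y ∈ X)

lemma Cellular.mono {𝔽 𝔽' : Finset ((Fin n → ℝ) × ℝ)} (h : 𝔽 ⊆ 𝔽') {X : Set (Fin n → ℝ)}
    (hX : Cellular 𝔽 X) : Cellular 𝔽' X :=
  fun x y hxy => hX x y fun p hp => hxy p (h hp)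

lemma Cellular.union {𝔽 : Finset ((Fin n → ℝ) × ℝ)} {X Y : Set (Fin n → ℝ)}
    (hX : Cellular 𝔽 X) (hY : Cellular 𝔽 Y) : Cellular 𝔽 (X ∪ Y) := by
  intro x y hxy
  simp only [Set.mem_union, hX x y hxy, hY x y hxy]

lemma Cellular.inter {𝔽 : Finset ((Fin n → ℝ) × ℝ)} {X Y : Set (Fin n → ℝ)}
    (hX : Cellular 𝔽 X) (hY : Cellular 𝔽 Y) : Cellular 𝔽 (X ∩ Y) := by
  intro x y hxy
  simp only [Set.mem_inter_iff, hX x y hxy, hY x y hxy]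

lemma Cellular.diff {𝔽 : Finset ((Fin n → ℝ) × ℝ)} {X Y : Set (Fin n → ℝ)}
    (hX : Cellular 𝔽 X) (hY : Cellular 𝔽 Y) : Cellular 𝔽 (X \ Y) := by
  intro x y hxy
  simp only [Set.mem_diff, hX x y hxy, hY x y hxy]

lemma cellular_empty (𝔽 : Finset ((Fin n → ℝ) × ℝ)) : Cellular 𝔽 (∅ : Set (Fin n → ℝ)) :=
  fun _ _ _ => Iff.rfl

/-- Finiteness of the collection of `𝔽`-cellular sets. -/
lemma cellular_finite (𝔽 : Finset ((Fin n → ℝ) × ℝ)) :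
    {X : Set (Fin n → ℝ) | Cellular 𝔽 X}.Finite := by
  classical
  set σ : (Fin n → ℝ) → ({p // p ∈ 𝔽} → SignType) :=
    fun x p => SignType.sign (aeval p.1 x) with hσ
  apply Set.Finite.of_finite_image (f := fun X => σ '' X)
  · exact Set.toFinite _
  · intro X hX Y hY hXY
    have key : ∀ Z ∈ {X : Set (Fin n → ℝ) | Cellular 𝔽 X}, Z = {x | σ x ∈ σ '' Z} := by
      intro Z hZ
      ext x
      constructor
      · exact fun hx => ⟨x, hx, rfl⟩
      · rintro ⟨x', hx', hxx'⟩
        have : ∀ p ∈ 𝔽, SignType.sign (aeval p x') = SignType.sign (aeval p x) :=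
          fun p hp => congrFun hxx' ⟨p, hp⟩
        exact (hZ x' x this).mp hx'
    have h' : σ '' X = σ '' Y := hXY
    rw [key X hX, key Y hY, h']

/-- Membership in the subspace interior. -/
lemma mem_intSub {P S : Set (Fin n → ℝ)} {x : Fin n → ℝ} :
    x ∈ intSub P S ↔ x ∈ P ∧ ∃ U, IsOpen U ∧ x ∈ U ∧ U ∩ P ⊆ S := by
  constructor
  · rintro ⟨z, hz, rfl⟩
    obtain ⟨t, hts, hto, hzt⟩ := mem_interior.mp hz
    obtain ⟨U, hU, hUt⟩ := isOpen_induced_iff.mp hto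
    refine ⟨z.2, U, hU, ?_, ?_⟩
    · have : z ∈ Subtype.val ⁻¹' U := hUt ▸ hzt
      exact this
    · rintro w ⟨hwU, hwP⟩
      have : (⟨w, hwP⟩ : P) ∈ Subtype.val ⁻¹' U := hwU
      exact hts (hUt ▸ this)
  · rintro ⟨hxP, U, hU, hxU, hUPS⟩
    refine ⟨⟨x, hxP⟩, ?_, rfl⟩
    have hsub : (Subtype.val ⁻¹' U : Set P) ⊆ (Subtype.val ⁻¹' S : Set P) :=
      fun w hw => hUPS ⟨hw, w.2⟩
    exact interior_maximal hsub (hU.preimage continuous_subtype_val) hxU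

lemma intSub_subset (P S : Set (Fin n → ℝ)) : intSub P S ⊆ P :=
  fun _ hx => (mem_intSub.mp hx).1

/-- The key lemma: the subspace interior of a cellular set is cellular. -/
lemma Cellular.intSubCell {𝔽 : Finset ((Fin n → ℝ) × ℝ)} {P X : Set (Fin n → ℝ)}
    (hP : Cellular 𝔽 P) (hX : Cellular 𝔽 X) : Cellular 𝔽 (intSub P X) := by
  classical
  have aux : ∀ x y, (∀ p ∈ 𝔽, SignType.sign (aeval p x) = SignType.sign (aeval p y)) →
      y ∈ intSub P X → x ∈ intSub P X := by
    intro x y hxy hy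
    obtain ⟨hyP, U, hU, hyU, hUPX⟩ := mem_intSub.mp hy
    have hxP : x ∈ P := (hP x y hxy).mpr hyP
    -- the sign-compatible open neighbourhood of x
    set W : Set (Fin n → ℝ) := ⋂ p ∈ 𝔽, (if 0 < aeval p x then {z | 0 < aeval p z}
      else if aeval p x < 0 then {z | aeval p z < 0} else Set.univ) with hWdef
    have hWopen : IsOpen W := by
      apply Set.Finite.isOpen_biInter 𝔽.finite_toSet
      intro p _
      split_ifs
      · exact isOpen_lt continuous_const (aeval_continuous p)
      · exact isOpen_lt (aeval_continuous p) continuous_const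
      · exact isOpen_univ
    have hxW : x ∈ W := by
      rw [hWdef]
      apply Set.mem_iInter₂.mpr
      intro p _
      split_ifs with h1 h2
      · exact h1
      · exact h2
      · trivial
    refine mem_intSub.mpr ⟨hxP, W, hWopen, hxW, ?_⟩
    rintro z ⟨hzW, hzP⟩
    -- find z' close to y with the same signs as z
    set g : ℝ → (Fin n → ℝ) := fun t => fun j => y j + t * (z j - x j) with hgdef
    have hgcont : Continuous g := by
      apply continuous_pi
      intro j
      exact continuous_const.add (continuous_id.mul continuous_const)
    set O : Set (Fin n → ℝ) := U ∩ ⋂ p ∈ 𝔽,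
      (if aeval p y = 0 then Set.univ else {v | 0 < aeval p v * aeval p y}) with hOdef
    have hOopen : IsOpen O := by
      apply hU.inter
      apply Set.Finite.isOpen_biInter 𝔽.finite_toSet
      intro p _
      split_ifs
      · exact isOpen_univ
      · exact isOpen_lt continuous_const ((aeval_continuous p).mul continuous_const)
    have hyO : y ∈ O := by
      refine ⟨hyU, Set.mem_iInter₂.mpr fun p _ => ?_⟩
      split_ifs with h
      · trivial
      · exact mul_self_pos.mpr h
    have hg0 : g 0 ∈ O := by
      have : g 0 = y := by funext j; simp [hgdef]
      rwa [this]
    -- pick a small positive t with g t ∈ O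
    obtain ⟨ε, hε, hball⟩ := Metric.isOpen_iff.mp (hOopen.preimage hgcont) 0 hg0
    set t := ε / 2 with htdef
    have ht0 : 0 < t := by positivity
    have hgt : g t ∈ O := by
      apply hball
      simp only [Metric.mem_ball, Real.dist_eq, sub_zero, htdef]
      rw [abs_of_pos (by positivity)]
      linarith
    -- g t has the same sign vector as z
    have hsigns : ∀ p ∈ 𝔽, SignType.sign (aeval p (g t)) = SignType.sign (aeval p z) := by
      intro p hp
      have hcombo : aeval p (g t) = aeval p y + t * (aeval p z - aeval p x) :=
        aeval_combo p x y z t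
      by_cases hx0 : aeval p x = 0
      · have hy0 : aeval p y = 0 := by
          have := hxy p hp
          rw [hx0, sign_zero] at this
          exact sign_eq_zero_iff.mp this.symm
        rw [hcombo, hy0, hx0, zero_add, sub_zero, sign_mul,
          sign_pos ht0, one_mul]
      · -- aeval p x ≠ 0 : use W and O
        have hO2 := (Set.mem_iInter₂.mp hgt.2) p hp
        have hy0 : aeval p y ≠ 0 := by
          intro h
          apply hx0
          have := hxy p hp
          rw [h, sign_zero] at this
          exact sign_eq_zero_iff.mp this
        rw [if_neg hy0] at hO2
        simp only [Set.mem_setOf_eq] at hO2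
        have hW2 := (Set.mem_iInter₂.mp (hWdef ▸ hzW)) p hp
        rcases lt_or_gt_of_ne hx0 with hneg | hpos
        · rw [if_neg (by linarith), if_pos hneg] at hW2
          have hyneg : aeval p y < 0 := by
            rcases lt_trichotomy (aeval p y) 0 with h | h | h
            · exact h
            · exact absurd h hy0
            · have := hxy p hp
              rw [sign_pos h, sign_neg hneg] at this
              simp at this
          have hgneg : aeval p (g t) < 0 := by
            rcases mul_pos_iff.mp hO2 with ⟨h1, h2⟩ | ⟨h1, h2⟩
            · linarith
            · exact h1
          rw [sign_neg hgneg, sign_neg hW2]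
        · rw [if_pos hpos] at hW2
          have hypos : 0 < aeval p y := by
            rcases lt_trichotomy (aeval p y) 0 with h | h | h
            · have := hxy p hp
              rw [sign_pos hpos, sign_neg h] at this
              simp at this
            · exact absurd h hy0
            · exact h
          have hgpos : 0 < aeval p (g t) := by
            rcases mul_pos_iff.mp hO2 with ⟨h1, h2⟩ | ⟨h1, h2⟩
            · exact h1
            · linarith
          rw [sign_pos hgpos, sign_pos hW2]
    have hgtP : g t ∈ P := (hP (g t) z hsigns).mpr hzP
    have hgtX : g t ∈ X := hUPX ⟨hgt.1, hgtP⟩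
    exact (hX (g t) z hsigns).mp hgtX
  intro x y hxy
  exact ⟨fun h => aux y x (fun p hp => (hxy p hp).symm) h, fun h => aux x y hxy h⟩


/-- Every polyhedron is cellular for some finite family of affine functionals. -/
lemma isPolyhedron_cellular {Q : Set (Fin n → ℝ)} (hQ : IsPolyhedron Q) :
    ∃ 𝔽 : Finset ((Fin n → ℝ) × ℝ), Cellular 𝔽 Q := by
  classical
  obtain ⟨S, hSfin, hSpoly, rfl⟩ := hQ
  set g : Set (Fin n → ℝ) → Finset ((Fin n → ℝ) × ℝ) :=
    fun s => if h : IsPolytope s then (isPolytope_rep h).choose else ∅ with hg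
  refine ⟨hSfin.toFinset.biUnion g, ?_⟩
  have sle : ∀ a b : ℝ, SignType.sign a = SignType.sign b → a ≤ 0 → b ≤ 0 := by
    intro a b h ha
    by_contra hb
    push_neg at hb
    rw [sign_pos hb] at h
    have := sign_eq_one_iff.mp h
    linarith
  have hmem : ∀ s ∈ S, ∀ z w : Fin n → ℝ,
      (∀ p ∈ hSfin.toFinset.biUnion g, SignType.sign (aeval p z) = SignType.sign (aeval p w)) →
      z ∈ s → w ∈ s := by
    intro s hs z w hzw hzs
    have hpt := hSpoly s hs
    have hrep := (isPolytope_rep hpt).choose_spec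
    have hgs : g s = (isPolytope_rep hpt).choose := by rw [hg]; simp [hpt]
    rw [hrep] at hzs ⊢
    intro p hp
    have hpF : p ∈ hSfin.toFinset.biUnion g :=
      Finset.mem_biUnion.mpr ⟨s, hSfin.mem_toFinset.mpr hs, hgs ▸ hp⟩
    exact sle _ _ (hzw p hpF) (hzs p hp)
  intro x y hxy
  constructor
  · rintro ⟨s, hs, hxs⟩
    exact ⟨s, hs, hmem s hs x y hxy hxs⟩
  · rintro ⟨s, hs, hys⟩
    exact ⟨s, hs, hmem s hs y x (fun p hp => (hxy p hp).symm) hys⟩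

end LocFin

/-- Given open subpolyhedra `O₁, …, O_m` of a polyhedron `P ⊆ ℝⁿ`, the
smallest collection `G` of subsets of `P` containing `∅`, `P`, and the `O i`, and closed
under binary union, binary intersection, and Heyting implication
`(U, V) ↦ int_P ((P \ U) ∪ V)`, is finite.  Consequently the Heyting algebra of open
subpolyhedra of `P` is locally finite. -/

theorem locally_finite_open_subpoly {n m : ℕ} (P : Set (Fin n → ℝ)) (hP : IsPolyhedron P)
    (O : Fin m → Set (Fin n → ℝ)) (hO : ∀ i, IsOpenSubpoly P (O i)) :
    ∃ G : Set (Set (Fin n → ℝ)), G.Finite ∧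
      ∅ ∈ G ∧ P ∈ G ∧ (∀ i, O i ∈ G) ∧
      (∀ U ∈ G, ∀ V ∈ G, U ∪ V ∈ G) ∧
      (∀ U ∈ G, ∀ V ∈ G, U ∩ V ∈ G) ∧
      (∀ U ∈ G, ∀ V ∈ G, intSub P ((P \ U) ∪ V) ∈ G) ∧
      (∀ G' : Set (Set (Fin n → ℝ)),
        (∅ ∈ G' ∧ P ∈ G' ∧ (∀ i, O i ∈ G') ∧
          (∀ U ∈ G', ∀ V ∈ G', U ∪ V ∈ G') ∧
          (∀ U ∈ G', ∀ V ∈ G', U ∩ V ∈ G') ∧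
          (∀ U ∈ G', ∀ V ∈ G', intSub P ((P \ U) ∪ V) ∈ G')) → G ⊆ G') := by
  classical
  obtain ⟨F0, hF0⟩ := LocFin.isPolyhedron_cellular hP
  have hOc : ∀ i, ∃ F, LocFin.Cellular F (P \ O i) :=
    fun i => LocFin.isPolyhedron_cellular (hO i).2
  choose Fi hFi using hOc
  set 𝔽 := F0 ∪ Finset.univ.biUnion Fi with h𝔽
  have hPc : LocFin.Cellular 𝔽 P := hF0.mono Finset.subset_union_left
  have hOic : ∀ i, LocFin.Cellular 𝔽 (O i) := by
    intro i
    have h1 : LocFin.Cellular 𝔽 (P \ O i) := (hFi i).mono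
      (fun p hp => Finset.mem_union_right _ (Finset.mem_biUnion.mpr ⟨i, Finset.mem_univ i, hp⟩))
    have h2 : O i = P \ (P \ O i) := (Set.diff_diff_cancel_left (hO i).1).symm
    rw [h2]
    exact hPc.diff h1
  set Gc : Set (Set (Fin n → ℝ)) := {X | X ⊆ P ∧ LocFin.Cellular 𝔽 X} with hGc
  have hGcfin : Gc.Finite := (LocFin.cellular_finite 𝔽).subset (fun X hX => hX.2)
  have hGcE : ∅ ∈ Gc := ⟨Set.empty_subset _, LocFin.cellular_empty 𝔽⟩
  have hGcP : P ∈ Gc := ⟨subset_rfl, hPc⟩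
  have hGcO : ∀ i, O i ∈ Gc := fun i => ⟨(hO i).1, hOic i⟩
  have hGcU : ∀ U ∈ Gc, ∀ V ∈ Gc, U ∪ V ∈ Gc :=
    fun U hU V hV => ⟨Set.union_subset hU.1 hV.1, hU.2.union hV.2⟩
  have hGcI : ∀ U ∈ Gc, ∀ V ∈ Gc, U ∩ V ∈ Gc :=
    fun U hU V hV => ⟨fun x hx => hU.1 hx.1, hU.2.inter hV.2⟩
  have hGcH : ∀ U ∈ Gc, ∀ V ∈ Gc, intSub P ((P \ U) ∪ V) ∈ Gc :=
    fun U hU V hV =>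
      ⟨LocFin.intSub_subset P _, hPc.intSubCell ((hPc.diff hU.2).union hV.2)⟩
  refine ⟨{X | ∀ G' : Set (Set (Fin n → ℝ)),
      (∅ ∈ G' ∧ P ∈ G' ∧ (∀ i, O i ∈ G') ∧
        (∀ U ∈ G', ∀ V ∈ G', U ∪ V ∈ G') ∧
        (∀ U ∈ G', ∀ V ∈ G', U ∩ V ∈ G') ∧
        (∀ U ∈ G', ∀ V ∈ G', intSub P ((P \ U) ∪ V) ∈ G')) → X ∈ G'},
    ?_, ?_, ?_, ?_, ?_, ?_, ?_, ?_⟩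
  · exact hGcfin.subset (fun X hX => hX Gc ⟨hGcE, hGcP, hGcO, hGcU, hGcI, hGcH⟩)
  · exact fun G' h => h.1
  · exact fun G' h => h.2.1
  · exact fun i G' h => h.2.2.1 i
  · exact fun U hU V hV G' h => h.2.2.2.1 U (hU G' h) V (hV G' h)
  · exact fun U hU V hV G' h => h.2.2.2.2.1 U (hU G' h) V (hV G' h)
  · exact fun U hU V hV G' h => h.2.2.2.2.2 U (hU G' h) V (hV G' h)
  · exact fun G' h X hX => hX G' h
end

section
/- Let Σ be a triangulation in ℝⁿ and let C be a nonempty Σ-definable polyhedron. Then C is join-irreducible in the lattice of Σ-definable polyhedra — i.e. whenever C = A ∪ B with A, B Σ-definable polyhedra, C = A or C = B — if and only if C is a simplex of Σ. -/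
open Set

section Aux
open Finset


-- core barycentric uniqueness
lemma bary_unique {n : ℕ} {W : Finset (Fin n → ℝ)}
    (hA : AffineIndependent ℝ (fun x : {x : Fin n → ℝ // x ∈ W} => x.val))
    {w1 w2 : (Fin n → ℝ) → ℝ} (h1 : ∑ y ∈ W, w1 y = 1) (h2 : ∑ y ∈ W, w2 y = 1)
    (heq : ∑ y ∈ W, w1 y • y = ∑ y ∈ W, w2 y • y) :
    ∀ u ∈ W, w1 u = w2 u := by
  have hs1 : ∑ i : {x : Fin n → ℝ // x ∈ W}, w1 i.val = 1 := by
    rw [Finset.univ_eq_attach, Finset.sum_attach W (fun y => w1 y)]; exact h1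
  have hs2 : ∑ i : {x : Fin n → ℝ // x ∈ W}, w2 i.val = 1 := by
    rw [Finset.univ_eq_attach, Finset.sum_attach W (fun y => w2 y)]; exact h2
  have hc : Finset.univ.affineCombination ℝ (fun x : {x : Fin n → ℝ // x ∈ W} => x.val)
        (fun i => w1 i.val) =
      Finset.univ.affineCombination ℝ (fun x : {x : Fin n → ℝ // x ∈ W} => x.val)
        (fun i => w2 i.val) := by
    rw [Finset.affineCombination_eq_linear_combination _ _ _ hs1,
      Finset.affineCombination_eq_linear_combination _ _ _ hs2,
      Finset.univ_eq_attach, Finset.sum_attach W (fun y => w1 y • y),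
      Finset.sum_attach W (fun y => w2 y • y)]
    exact heq
  have := hA.indicator_eq_of_affineCombination_eq Finset.univ Finset.univ _ _ hs1 hs2 hc
  intro u hu
  have := congrFun this ⟨u, hu⟩
  simpa using this

-- each vertex of an affinely independent set is an extreme point of its convex hull
lemma vertex_extreme {n : ℕ} {W : Finset (Fin n → ℝ)}
    (hA : AffineIndependent ℝ (fun x : {x : Fin n → ℝ // x ∈ W} => x.val))
    {w : Fin n → ℝ} (hw : w ∈ W) :
    w ∈ Set.extremePoints ℝ (convexHull ℝ (W : Set (Fin n → ℝ))) := by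
  rw [mem_extremePoints]
  refine ⟨subset_convexHull ℝ _ hw, ?_⟩
  intro x1 hx1 x2 hx2 hseg
  rw [Finset.mem_convexHull'] at hx1 hx2
  obtain ⟨u1, hu1n, hu1s, hu1⟩ := hx1
  obtain ⟨u2, hu2n, hu2s, hu2⟩ := hx2
  obtain ⟨a, b, ha, hb, hab, hx⟩ := hseg
  -- w = ∑ (a * u1 y + b * u2 y) • y
  have hsum : ∑ y ∈ W, (a * u1 y + b * u2 y) = 1 := by
    simp [Finset.sum_add_distrib, ← Finset.mul_sum, hu1s, hu2s, hab]
  have hrep : ∑ y ∈ W, (a * u1 y + b * u2 y) • y = w := by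
    simp only [add_smul, mul_smul, Finset.sum_add_distrib, ← Finset.smul_sum, hu1, hu2]
    exact hx
  have hdsum : ∑ y ∈ W, (fun y => if y = w then (1:ℝ) else 0) y = 1 := by
    rw [Finset.sum_ite_eq' W w (fun _ => (1:ℝ))]; simp [hw]
  have hdrep : ∑ y ∈ W, (if y = w then (1:ℝ) else 0) • y = w := by
    have : ∀ y ∈ W, (if y = w then (1:ℝ) else 0) • y =
        (if y = w then w else 0) := by
      intro y hy; split <;> simp_all
    rw [Finset.sum_congr rfl this, Finset.sum_ite_eq' W w (fun _ => w)]
    simp [hw]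
  have key := bary_unique hA hsum hdsum (by rw [hrep, hdrep])
  -- for y ≠ w, u1 y = 0 and u2 y = 0
  have hzero : ∀ y ∈ W, y ≠ w → u1 y = 0 ∧ u2 y = 0 := by
    intro y hy hyw
    have := key y hy
    rw [if_neg hyw] at this
    have h1 : 0 ≤ a * u1 y := mul_nonneg ha.le (hu1n y hy)
    have h2 : 0 ≤ b * u2 y := mul_nonneg hb.le (hu2n y hy)
    have ha1 : a * u1 y = 0 := by linarith
    have hb1 : b * u2 y = 0 := by linarith
    exact ⟨by
      rcases mul_eq_zero.1 ha1 with h | h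
      · exact absurd h ha.ne'
      · exact h, by
      rcases mul_eq_zero.1 hb1 with h | h
      · exact absurd h hb.ne'
      · exact h⟩
  have he1 : u1 w = 1 := by
    have : ∑ y ∈ W, u1 y = u1 w := by
      apply Finset.sum_eq_single_of_mem w hw
      intro y hy hyw; exact (hzero y hy hyw).1
    rw [← this, hu1s]
  have he2 : u2 w = 1 := by
    have : ∑ y ∈ W, u2 y = u2 w := by
      apply Finset.sum_eq_single_of_mem w hw
      intro y hy hyw; exact (hzero y hy hyw).2
    rw [← this, hu2s]
  constructor
  · rw [← hu1]
    rw [Finset.sum_eq_single_of_mem w hw (fun y hy hyw => by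
      rw [(hzero y hy hyw).1, zero_smul]), he1, one_smul]
  · rw [← hu2]
    rw [Finset.sum_eq_single_of_mem w hw (fun y hy hyw => by
      rw [(hzero y hy hyw).2, zero_smul]), he2, one_smul]

-- uniqueness of vertex sets of simplices
lemma vertexset_unique {n : ℕ} {V W : Finset (Fin n → ℝ)}
    (hV : AffineIndependent ℝ (fun x : {x : Fin n → ℝ // x ∈ V} => x.val))
    (hW : AffineIndependent ℝ (fun x : {x : Fin n → ℝ // x ∈ W} => x.val))
    (h : convexHull ℝ (V : Set (Fin n → ℝ)) = convexHull ℝ (W : Set (Fin n → ℝ))) :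
    V = W := by
  have h1 : (V : Set (Fin n → ℝ)) ⊆ W := by
    intro v hv
    have := vertex_extreme hV (Finset.mem_coe.1 hv)
    rw [h] at this
    exact extremePoints_convexHull_subset this
  have h2 : (W : Set (Fin n → ℝ)) ⊆ V := by
    intro w hw
    have := vertex_extreme hW (Finset.mem_coe.1 hw)
    rw [← h] at this
    exact extremePoints_convexHull_subset this
  exact Finset.coe_injective (subset_antisymm h1 h2)

-- the barycenter of a simplex lies in the hull of a subset of vertices only if it's everything
lemma centroid_detects {n : ℕ} {V W : Finset (Fin n → ℝ)} (hWne : W.Nonempty)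
    (hA : AffineIndependent ℝ (fun x : {x : Fin n → ℝ // x ∈ W} => x.val))
    (hVW : V ⊆ W)
    (hmem : ∑ y ∈ W, ((W.card : ℝ)⁻¹) • y ∈ convexHull ℝ (V : Set (Fin n → ℝ))) :
    V = W := by
  have hcard : (0:ℝ) < (W.card : ℝ) := by
    exact_mod_cast Finset.card_pos.2 hWne
  have hcsum : ∑ y ∈ W, ((W.card : ℝ)⁻¹ : ℝ) = 1 := by
    rw [Finset.sum_const, nsmul_eq_mul]
    field_simp
  rw [Finset.mem_convexHull'] at hmem
  obtain ⟨u, hun, hus, hu⟩ := hmem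
  set u' : (Fin n → ℝ) → ℝ := fun y => if y ∈ V then u y else 0 with hu'
  have hus' : ∑ y ∈ W, u' y = 1 := by
    rw [← hus]
    rw [Finset.sum_ite_mem, Finset.inter_eq_right.2 hVW]
  have hurep : ∑ y ∈ W, u' y • y = ∑ y ∈ W, ((W.card : ℝ)⁻¹) • y := by
    rw [← hu]
    have : ∑ y ∈ W, u' y • y = ∑ y ∈ W, (if y ∈ V then u y • y else 0) := by
      apply Finset.sum_congr rfl; intro y _; simp only [hu']; split <;> simp
    rw [this, Finset.sum_ite_mem, Finset.inter_eq_right.2 hVW]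
  have key := bary_unique hA hus' hcsum hurep
  apply Finset.Subset.antisymm hVW
  intro w hw
  by_contra hwv
  have hk := key w hw
  simp only [hu', if_neg hwv] at hk
  exact absurd hk.symm (ne_of_gt (inv_pos.2 hcard))


lemma face_subset' {n : ℕ} {s t : Set (Fin n → ℝ)} (h : IsFaceOf s t) : s ⊆ t := by
  obtain ⟨W, V, _, _, ht, _, hVW, hs⟩ := h
  rw [hs, ht]
  exact convexHull_mono (by exact_mod_cast hVW)

lemma biUnion_sigmaDefinable' {n : ℕ} {K : Set (Set (Fin n → ℝ))} (hK : IsTriangulation K)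
    (E : Finset (Set (Fin n → ℝ))) (hE : ↑E ⊆ K) :
    SigmaDefinable K (⋃ s ∈ E, s) := by
  refine ⟨{t | t ∈ K ∧ ∃ s ∈ E, t ⊆ s}, fun t ht => ht.1, ?_, ?_⟩
  · intro s hs t hts
    exact ⟨hK.face_mem s hs.1 t hts,
      hs.2.imp fun u hu => ⟨hu.1, (face_subset' hts).trans hu.2⟩⟩
  · apply subset_antisymm
    · intro y hy
      simp only [Set.mem_iUnion] at hy
      obtain ⟨s, hsE, hys⟩ := hy
      exact ⟨s, ⟨hE hsE, s, hsE, subset_rfl⟩, hys⟩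
    · rintro y ⟨t, ⟨-, s, hsE, hts⟩, hyt⟩
      simp only [Set.mem_iUnion]
      exact ⟨s, hsE, hts hyt⟩

lemma exists_eq_of_irred' {n : ℕ} {K : Set (Set (Fin n → ℝ))} (hK : IsTriangulation K)
    {C : Set (Fin n → ℝ)}
    (hirr : ∀ A B : Set (Fin n → ℝ), SigmaDefinable K A → SigmaDefinable K B →
      C = A ∪ B → C = A ∨ C = B)
    (hne : C.Nonempty) :
    ∀ F : Finset (Set (Fin n → ℝ)), ↑F ⊆ K → C = ⋃ s ∈ F, s → ∃ s ∈ F, C = s := by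
  classical
  intro F
  induction F using Finset.induction_on with
  | empty =>
    intro _ h
    simp only [Finset.notMem_empty, Set.iUnion_of_empty, Set.iUnion_empty] at h
    exact absurd h.symm hne.ne_empty.symm
  | @insert a F ha ih =>
    intro hsub hCU
    rw [Finset.set_biUnion_insert] at hCU
    have hAdef : SigmaDefinable K a := by
      have := biUnion_sigmaDefinable' hK {a} (by
        intro t ht
        simp only [Finset.coe_singleton, Set.mem_singleton_iff] at ht
        exact ht ▸ hsub (Finset.mem_insert_self a F))
      simpa using this
    have hBdef : SigmaDefinable K (⋃ s ∈ F, s) :=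
      biUnion_sigmaDefinable' hK F fun t ht =>
        hsub (Finset.mem_insert_of_mem ht)
    rcases hirr a (⋃ s ∈ F, s) hAdef hBdef hCU with h | h
    · exact ⟨a, Finset.mem_insert_self a F, h⟩
    · obtain ⟨s, hs, hCs⟩ := ih (fun t ht => hsub (Finset.mem_insert_of_mem ht)) h
      exact ⟨s, Finset.mem_insert_of_mem hs, hCs⟩

end Aux

/-- A nonempty `K`-definable polyhedron `C` is join-irreducible in the
lattice of `K`-definable polyhedra iff `C` is a simplex of `K`. -/
theorem joinIrreducible_iff_simplex {n : ℕ} (K : Set (Set (Fin n → ℝ)))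
    (hK : IsTriangulation K)
    (C : Set (Fin n → ℝ)) (hC : SigmaDefinable K C) (hne : C.Nonempty) :
    (∀ A B : Set (Fin n → ℝ), SigmaDefinable K A → SigmaDefinable K B →
        C = A ∪ B → C = A ∨ C = B) ↔ C ∈ K := by
  constructor
  · intro hirr
    obtain ⟨D, hDK, _, hCD⟩ := hC
    have hDfin : D.Finite := hK.finite.subset hDK
    have hCU : C = ⋃ s ∈ hDfin.toFinset, s := by
      rw [hCD, Set.sUnion_eq_biUnion]
      apply le_antisymm
      · exact Set.iUnion₂_mono' fun s hs => ⟨s, hDfin.mem_toFinset.2 hs, subset_rfl⟩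
      · exact Set.iUnion₂_mono' fun s hs => ⟨s, hDfin.mem_toFinset.1 hs, subset_rfl⟩
    obtain ⟨s, hs, hCs⟩ := exists_eq_of_irred' hK hirr hne hDfin.toFinset
      (by rw [Set.Finite.coe_toFinset]; exact hDK) hCU
    rw [hCs]
    exact hDK (hDfin.mem_toFinset.1 hs)
  · intro hCK A B hA hB hAB
    obtain ⟨W, hWne, hWind, hCW⟩ := hK.simplex C hCK
    set x : Fin n → ℝ := ∑ y ∈ W, ((W.card : ℝ)⁻¹) • y with hx
    have hcard : (0:ℝ) < (W.card : ℝ) := by exact_mod_cast Finset.card_pos.2 hWne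
    have hxC : x ∈ C := by
      rw [hCW, Finset.mem_convexHull']
      refine ⟨fun _ => (W.card : ℝ)⁻¹, fun y _ => by positivity, ?_, rfl⟩
      rw [Finset.sum_const, nsmul_eq_mul]
      field_simp
    have key : ∀ P : Set (Fin n → ℝ), SigmaDefinable K P → x ∈ P → C ⊆ P := by
      rintro P ⟨DP, hDPK, -, rfl⟩ hxP
      obtain ⟨t, htD, hxt⟩ := hxP
      have htK := hDPK htD
      rcases hK.inter C hCK t htK with hemp | ⟨hf, -⟩
      · exact absurd (Set.mem_inter hxC hxt) (by rw [hemp]; exact fun h => h)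
      · obtain ⟨W', V', hW'ne, hW'ind, hCW', hV'ne, hV'W', hCtV'⟩ := hf
        have hWW' : W' = W := vertexset_unique hW'ind hWind (by rw [← hCW', ← hCW])
        have hxV' : x ∈ convexHull ℝ (V' : Set (Fin n → ℝ)) := by
          rw [← hCtV']; exact ⟨hxC, hxt⟩
        have hVW : V' = W := centroid_detects hWne hWind (hWW' ▸ hV'W') hxV'
        have hCt : C ∩ t = C := by rw [hCtV', hVW, ← hCW]
        intro y hy
        exact Set.subset_sUnion_of_mem htD (by rw [← hCt] at hy; exact hy.2)
    have hxAB : x ∈ A ∪ B := hAB ▸ hxC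
    rcases hxAB with hxA | hxB
    · exact Or.inl (subset_antisymm (hAB ▸ Set.subset_union_left : A ⊆ C) (key A hA hxA)).symm
    · exact Or.inr (subset_antisymm (hAB ▸ Set.subset_union_right : B ⊆ C) (key B hB hxB)).symm
end
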